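/- arXiv:2401.04455 — 7 statements merged into one kernel-verified Lean document; each statement's English description precedes it below -/
import Mathlib

section
/- The law P_X is of pure type: exactly one of the following holds — P_X is purely atomic (there is a countable set of full P_X-measure), P_X is absolutely continuous with respect to Lebesgue measure on ℝ, or P_X has no atoms and is singular with respect to Lebesgue measure. -/
/-!
The functional equation `X = φ_ω (X ∘ T)` makes `{X ∈ C}` a `T`-invariant event whenever `C` is
invariant under the countable group `H` of affine maps generated by the `φ_ω`, so by ergodicity
`P_X C ∈ {0, 1}` for every such Borel set. Saturating a set under `H` keeps it countable, and keeps
it Lebesgue-null because affine maps are quasi-measure-preserving. Saturating the set of atoms shows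
that `P_X` is purely atomic or atomless; saturating a Lebesgue-null set shows that `P_X` is
absolutely continuous or singular.
-/

open MeasureTheory Filter

theorem Set.Countable.subgroupClosure {G : Type*} [Group G] {s : Set G} (hs : s.Countable) :
    (Subgroup.closure s : Set G).Countable := by
  have := hs.to_subtype
  rw [FreeGroup.closure_eq_range, MonoidHom.coe_range]
  exact Set.countable_range _

section AffineSaturation

variable {E : Type*} [NormedAddCommGroup E] [NormedSpace ℝ E]

def affineSaturation (H : Subgroup (E ≃ᵃ[ℝ] E)) (B : Set E) : Set E :=
  ⋃ h ∈ H, h ⁻¹' B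

variable {H : Subgroup (E ≃ᵃ[ℝ] E)} {B : Set E}

theorem subset_affineSaturation : B ⊆ affineSaturation H B :=
  fun _ hy => Set.mem_biUnion H.one_mem hy

theorem apply_mem_affineSaturation_iff {g : E ≃ᵃ[ℝ] E} (hg : g ∈ H) (y : E) :
    g y ∈ affineSaturation H B ↔ y ∈ affineSaturation H B := by
  simp only [affineSaturation, Set.mem_iUnion, Set.mem_preimage, exists_prop]
  constructor
  · rintro ⟨h, hh, hy⟩
    exact ⟨h * g, H.mul_mem hh hg, hy⟩
  · rintro ⟨h, hh, hy⟩
    refine ⟨h * g⁻¹, H.mul_mem hh (H.inv_mem hg), ?_⟩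
    simpa [AffineEquiv.coe_mul, AffineEquiv.inv_def] using hy

theorem Set.Countable.affineSaturation (hB : B.Countable)
    (hH : (H : Set (E ≃ᵃ[ℝ] E)).Countable) : (affineSaturation H B).Countable :=
  hH.biUnion fun h _ => hB.preimage h.injective

variable [FiniteDimensional ℝ E] [MeasurableSpace E] [BorelSpace E]

theorem AffineEquiv.quasiMeasurePreserving (μ : Measure E) [μ.IsAddHaarMeasure]
    (e : E ≃ᵃ[ℝ] E) : Measure.QuasiMeasurePreserving e μ μ := by
  have he : ⇑e = (· + e 0) ∘ e.linear := by
    ext x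
    exact eq_add_of_sub_eq (by simpa using ((e : E →ᵃ[ℝ] E).linearMap_vsub x 0).symm)
  have hdet : LinearMap.det (e.linear : E →ₗ[ℝ] E) ≠ 0 := by
    rw [← LinearEquiv.coe_det]
    exact Units.ne_zero _
  rw [he]
  exact (measurePreserving_add_right μ (e 0)).quasiMeasurePreserving.comp
    (Measure.LinearMap.quasiMeasurePreserving μ _ hdet)

theorem MeasurableSet.affineSaturation (hB : MeasurableSet B)
    (hH : (H : Set (E ≃ᵃ[ℝ] E)).Countable) : MeasurableSet (affineSaturation H B) :=
  .biUnion hH fun h _ => (h : E →ᵃ[ℝ] E).continuous_of_finiteDimensional.measurable hB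

theorem measure_affineSaturation_eq_zero (μ : Measure E) [μ.IsAddHaarMeasure]
    (hH : (H : Set (E ≃ᵃ[ℝ] E)).Countable) (hB : μ B = 0) : μ (affineSaturation H B) = 0 :=
  (measure_biUnion_null_iff hH).2 fun h _ => (h.quasiMeasurePreserving μ).preimage_null hB

end AffineSaturation

def AffineEquiv.mulAdd (β : ℝ) (ρ : ℝˣ) : ℝ ≃ᵃ[ℝ] ℝ :=
  (AffineEquiv.homothetyUnitsMulHom 0 ρ).trans (AffineEquiv.constVAdd ℝ ℝ β)

@[simp]
theorem AffineEquiv.mulAdd_apply (β : ℝ) (ρ : ℝˣ) (y : ℝ) :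
    AffineEquiv.mulAdd β ρ y = β + ρ * y := by
  simp [AffineEquiv.mulAdd, AffineMap.homothety_apply]

theorem countable_setOf_affineEquiv_eq_add_mul {ι : Type*} {β ρ : ι → ℝ}
    (h : (Set.range fun i => (β i, ρ i)).Countable) :
    {e : ℝ ≃ᵃ[ℝ] ℝ | ∃ i, ∀ y, e y = β i + ρ i * y}.Countable := by
  refine Set.MapsTo.countable_of_injOn (f := fun e => (e 0, e 1 - e 0)) ?_ ?_ h
  · rintro e ⟨i, he⟩
    exact ⟨i, by simp [he]⟩
  · rintro e ⟨i, he⟩ e' ⟨i', he'⟩ hee'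
    simp only [he, he', mul_zero, add_zero, mul_one, add_sub_cancel_left, Prod.mk.injEq] at hee'
    ext y
    rw [he, he', hee'.1, hee'.2]

theorem eq_add_mul_of_hasSum_iterate {Ω : Type*} {T : Ω → Ω} {b r : Ω → ℝ} {ω : Ω} {x y : ℝ}
    (hx : HasSum (fun n => (∏ k ∈ Finset.range n, r (T^[k] ω)) * b (T^[n] ω)) x)
    (hy : HasSum (fun n => (∏ k ∈ Finset.range n, r (T^[k] (T ω))) * b (T^[n] (T ω))) y) :
    x = b ω + r ω * y := by
  have hshift := (hasSum_nat_add_iff (f := fun n => (∏ k ∈ Finset.range n, r (T^[k] ω)) *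
      b (T^[n] ω)) 1).1 <| (hy.mul_left (r ω)).congr_fun fun n => by
    simp only [Finset.prod_range_succ', Function.iterate_succ_apply, Function.iterate_zero_apply]
    ring
  simpa [add_comm] using hx.unique hshift

theorem QuasiErgodic.measure_preimage_eq_zero_or_one {Ω α : Type*} [MeasurableSpace Ω]
    [MeasurableSpace α] {P : Measure Ω} [IsProbabilityMeasure P] {T : Ω → Ω}
    (hT : QuasiErgodic T P) {X : Ω → α} (hX : Measurable X) {φ : Ω → α → α}
    (hXφ : ∀ᵐ ω ∂P, X ω = φ ω (X (T ω))) {C : Set α} (hC : MeasurableSet C)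
    (hφC : ∀ᵐ ω ∂P, ∀ y, φ ω y ∈ C ↔ y ∈ C) :
    P (X ⁻¹' C) = 0 ∨ P (X ⁻¹' C) = 1 := by
  have hinv : T ⁻¹' (X ⁻¹' C) =ᵐ[P] X ⁻¹' C := by
    refine eventuallyEq_set.2 ?_
    filter_upwards [hXφ, hφC] with ω hω hωC
    simp only [Set.mem_preimage]
    rw [hω, hωC]
  refine (hT.ae_empty_or_univ₀ (hX hC).nullMeasurableSet hinv).imp ae_eq_empty.1 fun h => ?_
  rw [measure_congr h, measure_univ]

section PureType

variable {α : Type*} [MeasurableSpace α] {μ ν : Measure α} [IsProbabilityMeasure μ]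

theorem atomic_or_atomless_of_zero_one [MeasurableSingletonClass α]
    (h : ∀ B : Set α, B.Countable → ∃ C, B ⊆ C ∧ C.Countable ∧ (μ C = 0 ∨ μ C = 1)) :
    (∃ s : Set α, s.Countable ∧ μ s = 1) ∨ ∀ a, μ {a} = 0 := by
  have hatoms : {a : α | 0 < μ {a}}.Countable :=
    Measure.countable_meas_pos_of_disjoint_iUnion (fun a => measurableSet_singleton a)
      fun a a' haa' => Set.disjoint_singleton.2 haa'
  obtain ⟨C, hatomsC, hC, hC01⟩ := h _ hatoms
  refine hC01.symm.imp (fun h1 => ⟨C, hC, h1⟩) fun h0 a => ?_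
  by_contra ha
  exact ha (measure_mono_null (Set.singleton_subset_iff.2 (hatomsC (pos_iff_ne_zero.2 ha))) h0)

theorem absolutelyContinuous_or_mutuallySingular_of_zero_one
    (h : ∀ N, MeasurableSet N → ν N = 0 →
      ∃ C, N ⊆ C ∧ MeasurableSet C ∧ ν C = 0 ∧ (μ C = 0 ∨ μ C = 1)) :
    μ ≪ ν ∨ μ ⟂ₘ ν := by
  refine or_iff_not_imp_right.2 fun hsing => Measure.AbsolutelyContinuous.mk fun N hN hN0 => ?_
  obtain ⟨C, hNC, hC, hC0, hC01⟩ := h N hN hN0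
  refine hC01.elim (measure_mono_null hNC) fun h1 => absurd ?_ hsing
  exact ⟨Cᶜ, hC.compl, (prob_compl_eq_zero_iff hC).2 h1, by rwa [compl_compl]⟩

theorem pure_type_of_dichotomies [NullSingletonClass ν]
    (hatom : (∃ s : Set α, s.Countable ∧ μ s = 1) ∨ ∀ a, μ {a} = 0)
    (hac_or_sing : μ ≪ ν ∨ μ ⟂ₘ ν) :
    ((∃ s : Set α, s.Countable ∧ μ s = 1) ∧ ¬ (μ ≪ ν) ∧ ¬ ((∀ a, μ {a} = 0) ∧ μ ⟂ₘ ν))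
    ∨ (¬ (∃ s : Set α, s.Countable ∧ μ s = 1) ∧ (μ ≪ ν) ∧ ¬ ((∀ a, μ {a} = 0) ∧ μ ⟂ₘ ν))
    ∨ (¬ (∃ s : Set α, s.Countable ∧ μ s = 1) ∧ ¬ (μ ≪ ν) ∧ ((∀ a, μ {a} = 0) ∧ μ ⟂ₘ ν)) := by
  have atomic_not_ac : (∃ s : Set α, s.Countable ∧ μ s = 1) → ¬ μ ≪ ν := by
    rintro ⟨s, hs, hs1⟩ hac
    simp [hac (hs.measure_zero ν)] at hs1
  have atomic_not_atomless : (∃ s : Set α, s.Countable ∧ μ s = 1) → ¬ ∀ a, μ {a} = 0 := by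
    rintro ⟨s, hs, hs1⟩ h0
    have : NullSingletonClass μ := ⟨h0⟩
    simp [hs.measure_zero μ] at hs1
  have ac_not_singular : μ ≪ ν → ¬ μ ⟂ₘ ν := fun hac hs => IsProbabilityMeasure.ne_zero μ
    (Measure.eq_zero_of_absolutelyContinuous_of_mutuallySingular hac hs)
  rcases hatom with hA | hA0
  · exact Or.inl ⟨hA, atomic_not_ac hA, fun h => atomic_not_atomless hA h.1⟩
  have not_atomic : ¬ ∃ s : Set α, s.Countable ∧ μ s = 1 := fun hA => atomic_not_atomless hA hA0
  rcases hac_or_sing with hac | hs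
  · exact Or.inr (Or.inl ⟨not_atomic, hac, fun h => ac_not_singular hac h.2⟩)
  · exact Or.inr (Or.inr ⟨not_atomic, fun hac => ac_not_singular hac hs, hA0, hs⟩)

end PureType

theorem pure_type_law_general
    {Ω : Type*} [MeasurableSpace Ω] (P : Measure Ω) [IsProbabilityMeasure P]
    (T : Ω → Ω) (hT : Ergodic T P)
    (b r : Ω → ℝ)
    (hrpos : ∀ ω, 0 < r ω)
    (hScount : Set.Countable {p : ℝ × ℝ | ∃ ω, (b ω, r ω) = p})
    (X : Ω → ℝ) (hX : Measurable X)
    (hXsum : ∀ᵐ ω ∂P,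
      HasSum (fun n : ℕ => (∏ k ∈ Finset.range n, r (T^[k] ω)) * b (T^[n] ω)) (X ω)) :
    ((∃ s : Set ℝ, s.Countable ∧ P.map X s = 1)
        ∧ ¬ (P.map X ≪ volume)
        ∧ ¬ ((∀ a : ℝ, P.map X {a} = 0) ∧ P.map X ⟂ₘ volume))
    ∨ (¬ (∃ s : Set ℝ, s.Countable ∧ P.map X s = 1)
        ∧ (P.map X ≪ volume)
        ∧ ¬ ((∀ a : ℝ, P.map X {a} = 0) ∧ P.map X ⟂ₘ volume))
    ∨ (¬ (∃ s : Set ℝ, s.Countable ∧ P.map X s = 1)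
        ∧ ¬ (P.map X ≪ volume)
        ∧ ((∀ a : ℝ, P.map X {a} = 0) ∧ P.map X ⟂ₘ volume)) := by
  have := Measure.isProbabilityMeasure_map (μ := P) hX.aemeasurable
  let φ ω := AffineEquiv.mulAdd (b ω) (Units.mk0 (r ω) (hrpos ω).ne')
  let H := Subgroup.closure {e : ℝ ≃ᵃ[ℝ] ℝ | ∃ ω, ∀ y, e y = b ω + r ω * y}
  have hH : (H : Set (ℝ ≃ᵃ[ℝ] ℝ)).Countable :=
    (countable_setOf_affineEquiv_eq_add_mul hScount).subgroupClosure
  have hXφ : ∀ᵐ ω ∂P, X ω = φ ω (X (T ω)) := by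
    filter_upwards [hXsum, hT.quasiMeasurePreserving.ae hXsum] with ω hω hTω
    simpa [φ] using eq_add_mul_of_hasSum_iterate hω hTω
  have h01 : ∀ B, MeasurableSet B →
      P.map X (affineSaturation H B) = 0 ∨ P.map X (affineSaturation H B) = 1 := by
    intro B hB
    rw [Measure.map_apply hX (hB.affineSaturation hH)]
    refine hT.quasiErgodic.measure_preimage_eq_zero_or_one hX hXφ (hB.affineSaturation hH)
      (ae_of_all _ fun ω => apply_mem_affineSaturation_iff (Subgroup.subset_closure ⟨ω, ?_⟩))
    simp [φ]
  refine pure_type_of_dichotomies ?_ ?_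
  · exact atomic_or_atomless_of_zero_one fun B hB =>
      ⟨_, subset_affineSaturation, hB.affineSaturation hH, h01 B hB.measurableSet⟩
  · exact absolutelyContinuous_or_mutuallySingular_of_zero_one fun N hN hN0 =>
      ⟨_, subset_affineSaturation, hN.affineSaturation hH,
        measure_affineSaturation_eq_zero volume hH hN0, h01 N hN⟩

/-- **Pure type law.** Exactly one of the following holds for the law `P_X` of the
random self-similar series `X(ω) = ∑_{n≥0} r_n(ω) b(T^n ω)`:
it is purely atomic, it is absolutely continuous w.r.t. Lebesgue measure, or it is
continuous (no atoms) and singular w.r.t. Lebesgue measure. -/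
theorem pure_type_law
    {Ω : Type*} [MeasurableSpace Ω] (P : Measure Ω) [IsProbabilityMeasure P]
    (T : Ω → Ω) (hT : Ergodic T P)
    (b r : Ω → ℝ) (hb : Measurable b) (hr : Measurable r)
    (hrpos : ∀ ω, 0 < r ω)
    (hbInt : Integrable b P)
    (hlogInt : Integrable (fun ω => Real.log (r ω)) P)
    (hlogNeg : ∫ ω, Real.log (r ω) ∂P < 0)
    (hScount : Set.Countable {p : ℝ × ℝ | ∃ ω, (b ω, r ω) = p})
    (hSpos : ∀ p ∈ {p : ℝ × ℝ | ∃ ω, (b ω, r ω) = p}, 0 < P {ω | (b ω, r ω) = p})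
    (X : Ω → ℝ) (hX : Measurable X)
    (hXsum : ∀ᵐ ω ∂P,
      HasSum (fun n : ℕ => (∏ k ∈ Finset.range n, r (T^[k] ω)) * b (T^[n] ω)) (X ω)) :
    ((∃ s : Set ℝ, s.Countable ∧ P.map X s = 1)
        ∧ ¬ (P.map X ≪ volume)
        ∧ ¬ ((∀ a : ℝ, P.map X {a} = 0) ∧ P.map X ⟂ₘ volume))
    ∨ (¬ (∃ s : Set ℝ, s.Countable ∧ P.map X s = 1)
        ∧ (P.map X ≪ volume)
        ∧ ¬ ((∀ a : ℝ, P.map X {a} = 0) ∧ P.map X ⟂ₘ volume))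
    ∨ (¬ (∃ s : Set ℝ, s.Countable ∧ P.map X s = 1)
        ∧ ¬ (P.map X ≪ volume)
        ∧ ((∀ a : ℝ, P.map X {a} = 0) ∧ P.map X ⟂ₘ volume)) :=
  pure_type_law_general P T hT b r hrpos hScount X hX hXsum
end

section
/- If P_X({a})>0 for some a∈ℝ, then P_X is purely atomic; more precisely P_X(𝒬)=1, where 𝒬={φ(c): c∈𝒫, φ∈∪_{n≥0}S^{(n)}} is countable, S^{(n)} denotes the set of n-fold compositions of elements of S, and 𝒫 is the set of fixed points of those compositions in ∪_{n≥1}S^{(n)} that are strict contractions. -/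
open MeasureTheory Filter Topology

/-- Composition of affine maps of `ℝ`, represented as pairs `(B, R)` meaning `y ↦ B + R y`. -/
def affComp (p q : ℝ × ℝ) : ℝ × ℝ := (p.1 + p.2 * q.1, p.2 * q.2)

/-- `compSet S n` is the set `S^{(n)}` of `n`-fold compositions of elements of `S`
(affine maps represented as pairs), with `S^{(0)} = {identity}`. -/
def compSet (S : Set (ℝ × ℝ)) : ℕ → Set (ℝ × ℝ)
  | 0 => {((0 : ℝ), (1 : ℝ))}
  | n + 1 => {q | ∃ p ∈ S, ∃ p' ∈ compSet S n, q = affComp p p'}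

lemma compSet_countable {S : Set (ℝ × ℝ)} (hS : S.Countable) :
    ∀ n, (compSet S n).Countable
  | 0 => Set.countable_singleton _
  | n + 1 => by
    have h : compSet S (n+1) =
        (fun q : (ℝ × ℝ) × (ℝ × ℝ) => affComp q.1 q.2) '' (S ×ˢ compSet S n) := by
      ext q
      simp only [compSet, Set.mem_setOf_eq, Set.mem_image, Set.mem_prod]
      constructor
      · rintro ⟨p, hp, p', hp', rfl⟩
        exact ⟨(p, p'), ⟨hp, hp'⟩, rfl⟩
      · rintro ⟨⟨p, p'⟩, ⟨hp, hp'⟩, rfl⟩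
        exact ⟨p, hp, p', hp', rfl⟩
    rw [h]
    exact (hS.prod (compSet_countable hS n)).image _

noncomputable def Phi {Ω : Type*} (b r : Ω → ℝ) (T : Ω → Ω) : ℕ → Ω → ℝ × ℝ
  | 0, _ => ((0 : ℝ), (1 : ℝ))
  | n + 1, ω => affComp (b ω, r ω) (Phi b r T n (T ω))

lemma Phi_mem {Ω : Type*} (b r : Ω → ℝ) (T : Ω → Ω) :
    ∀ (n : ℕ) (ω : Ω), Phi b r T n ω ∈ compSet {p : ℝ × ℝ | ∃ ω, (b ω, r ω) = p} n
  | 0, ω => rfl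
  | n + 1, ω => ⟨(b ω, r ω), ⟨ω, rfl⟩, Phi b r T n (T ω), Phi_mem b r T n (T ω), rfl⟩

lemma Phi_snd {Ω : Type*} (b r : Ω → ℝ) (T : Ω → Ω) :
    ∀ (n : ℕ) (ω : Ω), (Phi b r T n ω).2 = ∏ k ∈ Finset.range n, r (T^[k] ω)
  | 0, ω => by simp [Phi]
  | n + 1, ω => by
    have ih := Phi_snd b r T n (T ω)
    show r ω * (Phi b r T n (T ω)).2 = _
    rw [ih, Finset.prod_range_succ']
    have h1 : ∀ i, r (T^[i + 1] ω) = r (T^[i] (T ω)) := fun i => by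
      rw [Function.iterate_succ_apply]
    rw [Finset.prod_congr rfl (fun i _ => h1 i), Function.iterate_zero_apply]
    ring

lemma Phi_eval' {Ω : Type*} (b r : Ω → ℝ) (T : Ω → Ω) (X : Ω → ℝ) :
    ∀ (n : ℕ) (ω : Ω),
      (∀ k : ℕ, X (T^[k] ω) = b (T^[k] ω) + r (T^[k] ω) * X (T^[k + 1] ω)) →
      X ω = (Phi b r T n ω).1 + (Phi b r T n ω).2 * X (T^[n] ω)
  | 0, ω, _ => by simp [Phi]
  | n + 1, ω, h => by
    have h0 := h 0
    simp only [Function.iterate_zero_apply, zero_add, Function.iterate_one] at h0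
    have hT' : ∀ k : ℕ, X (T^[k] (T ω)) = b (T^[k] (T ω)) + r (T^[k] (T ω)) * X (T^[k + 1] (T ω)) := by
      intro k
      have := h (k + 1)
      rwa [Function.iterate_succ_apply, Function.iterate_succ_apply (f := T) (n := k + 1)] at this
    have ih := Phi_eval' b r T X n (T ω) hT'
    show X ω = (affComp (b ω, r ω) (Phi b r T n (T ω))).1 +
      (affComp (b ω, r ω) (Phi b r T n (T ω))).2 * X (T^[n + 1] ω)
    rw [Function.iterate_succ_apply]
    show X ω = (b ω + r ω * (Phi b r T n (T ω)).1) +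
      (r ω * (Phi b r T n (T ω)).2) * X (T^[n] (T ω))
    rw [h0, ih]
    ring

lemma ergodic_hitting {Ω : Type*} [MeasurableSpace Ω] (P : Measure Ω) [IsProbabilityMeasure P]
    (T : Ω → Ω) (hT : Ergodic T P) (f : Ω → ℝ) (hf : Measurable f) (hfi : Integrable f P)
    (hneg : ∫ ω, f ω ∂P < 0) (E : Set Ω) (hE : MeasurableSet E) (hEpos : 0 < P E) :
    ∀ᵐ ω ∂P, ∀ C : ℝ, ∃ n, 1 ≤ n ∧ T^[n] ω ∈ E ∧ ∑ k ∈ Finset.range n, f (T^[k] ω) < C := by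
  have hTm : Measurable T := hT.toMeasurePreserving.measurable
  have hTk : ∀ k, Measurable (T^[k]) := fun k => hTm.iterate k
  set S : ℕ → Ω → ℝ := fun n ω => ∑ k ∈ Finset.range n, f (T^[k] ω) with hSdef
  have hSm : ∀ n, Measurable (S n) := fun n =>
    Finset.measurable_sum _ (fun k _ => hf.comp (hTk k))
  have hScoc : ∀ n ω, S (n + 1) ω = f ω + S n (T ω) := by
    intro n ω
    simp only [hSdef]
    rw [Finset.sum_range_succ']
    have h1 : ∀ i, f (T^[i + 1] ω) = f (T^[i] (T ω)) := fun i => by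
      rw [Function.iterate_succ_apply]
    rw [Finset.sum_congr rfl (fun i _ => h1 i), Function.iterate_zero_apply]
    ring
  set D : Set Ω := {ω | ∀ C : ℝ, ∃ n, 1 ≤ n ∧ T^[n] ω ∈ E ∧ S n ω < C} with hDdef
  have hDmeas : MeasurableSet D := by
    have hEq : D = ⋂ j : ℕ, ⋃ n : ℕ,
        ({ω : Ω | 1 ≤ n} ∩ (T^[n] ⁻¹' E) ∩ {ω : Ω | S n ω < -(j : ℝ)}) := by
      ext ω
      simp only [hDdef, Set.mem_setOf_eq, Set.mem_iInter, Set.mem_iUnion, Set.mem_inter_iff,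
        Set.mem_preimage]
      constructor
      · intro h j
        obtain ⟨n, h1, h2, h3⟩ := h (-(j : ℝ))
        exact ⟨n, ⟨h1, h2⟩, h3⟩
      · intro h C
        obtain ⟨j, hj⟩ := exists_nat_ge (-C)
        obtain ⟨n, ⟨h1, h2⟩, h3⟩ := h j
        exact ⟨n, h1, h2, h3.trans_le (by linarith)⟩
    rw [hEq]
    exact MeasurableSet.iInter fun j => MeasurableSet.iUnion fun n =>
      ((MeasurableSet.const _).inter ((hTk n) hE)).inter
        (measurableSet_lt (hSm n) measurable_const)
  have hDinv : T ⁻¹' D = D := by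
    ext ω
    simp only [Set.mem_preimage, hDdef, Set.mem_setOf_eq]
    constructor
    · intro h C
      obtain ⟨n, h1, h2, h3⟩ := h (C - f ω)
      refine ⟨n + 1, by omega, ?_, ?_⟩
      · rw [Function.iterate_succ_apply]; exact h2
      · rw [hScoc]; linarith
    · intro h C
      obtain ⟨n, h1, h2, h3⟩ := h (min (C + f ω) (S 1 ω))
      have hn1 : n ≠ 1 := by
        rintro rfl
        exact absurd (h3.trans_le (min_le_right _ _)) (lt_irrefl _)
      obtain ⟨m, rfl⟩ : ∃ m, n = m + 2 := ⟨n - 2, by omega⟩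
      refine ⟨m + 1, by omega, ?_, ?_⟩
      · rw [← Function.iterate_succ_apply]; exact h2
      · have h4 : S (m + 2) ω = f ω + S (m + 1) (T ω) := hScoc (m + 1) ω
        have hmin := min_le_left (C + f ω) (S 1 ω)
        linarith
  rcases hT.toPreErgodic.ae_empty_or_univ hDmeas hDinv with h0 | h1
  · exfalso
    have hD0 : P D = 0 := by
      have := measure_congr h0
      simpa using this
    classical
    set g : ℕ → ℕ → Ω → ℝ := fun K n ω =>
      if T^[n+1] ω ∈ E then max (-(K:ℝ)) (min (K:ℝ) (S (n+1) ω)) else (K:ℝ) with hgdef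
    set N : ℕ → Ω → ℝ := fun K ω => ⨅ n : ℕ, g K n ω with hNdef
    have hglb : ∀ (K n : ℕ) (ω : Ω), -(K:ℝ) ≤ g K n ω := by
      intro K n ω
      simp only [hgdef]
      split_ifs
      · exact le_max_left _ _
      · have : (0:ℝ) ≤ K := Nat.cast_nonneg K
        linarith
    have hgub : ∀ K n ω, g K n ω ≤ (K:ℝ) := by
      intro K n ω
      simp only [hgdef]
      split_ifs
      · apply max_le
        · have : (0:ℝ) ≤ K := Nat.cast_nonneg K
          linarith
        · exact min_le_left _ _
      · exact le_rfl
    have hbdd : ∀ K ω, BddBelow (Set.range fun n => g K n ω) := fun K ω =>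
      ⟨-(K:ℝ), by rintro x ⟨n, rfl⟩; exact hglb K n ω⟩
    have hNlb : ∀ (K : ℕ) (ω : Ω), -(K:ℝ) ≤ N K ω := fun K ω => le_ciInf (fun n => hglb K n ω)
    have hNle : ∀ K n ω, N K ω ≤ g K n ω := fun K n ω => ciInf_le (hbdd K ω) n
    have hNub : ∀ K ω, N K ω ≤ (K:ℝ) := fun K ω => (hNle K 0 ω).trans (hgub K 0 ω)
    have hNmeas : ∀ K, Measurable (N K) := by
      intro K
      apply Measurable.iInf
      intro n
      simp only [hgdef]
      exact Measurable.ite ((hTk (n+1)) hE)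
        (measurable_const.max (measurable_const.min (hSm (n+1)))) measurable_const
    have hKey : ∀ (K : ℕ) (ω : Ω), -(K:ℝ) < N K ω → N K (T ω) < (K:ℝ) →
        N K ω ≤ f ω + N K (T ω) := by
      intro K ω hlb hub
      by_contra hcon
      push_neg at hcon
      have ht : N K (T ω) < min (K:ℝ) (N K ω - f ω) := lt_min hub (by linarith)
      obtain ⟨m, hm⟩ := exists_lt_of_ciInf_lt ht
      have hmK : g K m (T ω) < (K:ℝ) := lt_of_lt_of_le hm (min_le_left _ _)
      have hhit : T^[m+1] (T ω) ∈ E := by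
        by_contra hh
        simp only [hgdef, hh, if_false] at hmK
        exact absurd hmK (lt_irrefl _)
      have hgm : g K m (T ω) = max (-(K:ℝ)) (min (K:ℝ) (S (m+1) (T ω))) := by
        simp only [hgdef, hhit, if_true]
      have hsK : S (m+1) (T ω) < (K:ℝ) := by
        rw [hgm] at hmK
        have h2 := (max_lt_iff.mp hmK).2
        by_contra hge
        push_neg at hge
        rw [min_eq_left hge] at h2
        exact absurd h2 (lt_irrefl _)
      have hsle : S (m+1) (T ω) ≤ g K m (T ω) := by
        rw [hgm, min_eq_right hsK.le]
        exact le_max_right _ _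
      have hhit2 : T^[m+1+1] ω ∈ E := by
        rw [Function.iterate_succ_apply]
        exact hhit
      have hN2 : N K ω ≤ g K (m+1) ω := hNle K (m+1) ω
      have hg2 : g K (m+1) ω = max (-(K:ℝ)) (min (K:ℝ) (S (m+1+1) ω)) := by
        simp only [hgdef, hhit2, if_true]
      have hS2 : S (m+1+1) ω = f ω + S (m+1) (T ω) := hScoc (m+1) ω
      have h6 : N K ω ≤ max (-(K:ℝ)) (f ω + g K m (T ω)) := by
        rw [hg2, hS2] at hN2
        refine hN2.trans (max_le_max le_rfl ?_)
        exact (min_le_right _ _).trans (by linarith)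
      rcases le_max_iff.mp h6 with h | h
      · linarith
      · have h7 : g K m (T ω) < N K ω - f ω := lt_of_lt_of_le hm (min_le_right _ _)
        linarith
    set Gd : ℕ → Set Ω := fun K => {ω' | -(K:ℝ) < N K ω' ∧ N K (T ω') < (K:ℝ)} with hGddef
    have hGdmeas : ∀ K, MeasurableSet (Gd K) := fun K =>
      (measurableSet_lt measurable_const (hNmeas K)).inter
        (measurableSet_lt ((hNmeas K).comp hTm) measurable_const)
    have hPoint : ∀ K ω, N K ω - N K (T ω) ≤ (Gd K).indicator f ω := by
      intro K ω
      by_cases hmem : ω ∈ Gd K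
      · rw [Set.indicator_of_mem hmem]
        have := hKey K ω hmem.1 hmem.2
        linarith
      · rw [Set.indicator_of_notMem hmem]
        rw [hGddef, Set.mem_setOf_eq, not_and_or] at hmem
        rcases hmem with h | h
        · push_neg at h
          have := hNlb K (T ω)
          linarith
        · push_neg at h
          have := hNub K ω
          linarith
    have hNint : ∀ K, Integrable (N K) P := by
      intro K
      refine Integrable.mono' (integrable_const (K:ℝ)) (hNmeas K).aestronglyMeasurable ?_
      refine Filter.Eventually.of_forall fun ω => ?_
      rw [Real.norm_eq_abs, abs_le]
      exact ⟨hNlb K ω, hNub K ω⟩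
    have hNTint : ∀ K, Integrable (fun ω => N K (T ω)) P := by
      intro K
      refine Integrable.mono' (integrable_const (K:ℝ))
        ((hNmeas K).comp hTm).aestronglyMeasurable ?_
      refine Filter.Eventually.of_forall fun ω => ?_
      rw [Real.norm_eq_abs, abs_le]
      exact ⟨hNlb K (T ω), hNub K (T ω)⟩
    have hNT : ∀ K, ∫ ω, N K (T ω) ∂P = ∫ ω, N K ω ∂P := by
      intro K
      calc ∫ ω, N K (T ω) ∂P = ∫ y, N K y ∂(P.map T) :=
            (integral_map hTm.aemeasurable (hNmeas K).aestronglyMeasurable).symm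
        _ = ∫ ω, N K ω ∂P := by rw [hT.toMeasurePreserving.map_eq]
    have hstep1 : ∀ K, (0:ℝ) ≤ ∫ ω, (Gd K).indicator f ω ∂P := by
      intro K
      have h0' : ∫ ω, (N K ω - N K (T ω)) ∂P = 0 := by
        rw [integral_sub (hNint K) (hNTint K), hNT K, sub_self]
      calc (0:ℝ) = ∫ ω, (N K ω - N K (T ω)) ∂P := h0'.symm
        _ ≤ ∫ ω, (Gd K).indicator f ω ∂P :=
            integral_mono ((hNint K).sub (hNTint K)) (hfi.indicator (hGdmeas K)) (hPoint K)
    set Good : ℕ → Set Ω := fun K =>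
      {ω | ∀ n : ℕ, T^[n+1] ω ∈ E → -(K:ℝ) + 1 ≤ S (n+1) ω} ∩
      {ω | ∃ n : ℕ, T^[n+1] (T ω) ∈ E ∧ S (n+1) (T ω) < (K:ℝ)} with hGooddef
    have hGoodmeas : ∀ K, MeasurableSet (Good K) := by
      intro K
      refine MeasurableSet.inter ?_ ?_
      · have heq : {ω : Ω | ∀ n : ℕ, T^[n+1] ω ∈ E → -(K:ℝ) + 1 ≤ S (n+1) ω}
            = ⋂ n : ℕ, ((T^[n+1] ⁻¹' E)ᶜ ∪ {ω | -(K:ℝ) + 1 ≤ S (n+1) ω}) := by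
          ext ω
          simp only [Set.mem_setOf_eq, Set.mem_iInter, Set.mem_union, Set.mem_compl_iff,
            Set.mem_preimage]
          constructor
          · intro h n
            by_cases hh : T^[n+1] ω ∈ E
            · exact Or.inr (h n hh)
            · exact Or.inl hh
          · intro h n hn
            rcases h n with h | h
            · exact absurd hn h
            · exact h
        rw [heq]
        exact MeasurableSet.iInter fun n => (((hTk (n+1)) hE).compl).union
          (measurableSet_le measurable_const (hSm (n+1)))
      · have heq : {ω : Ω | ∃ n : ℕ, T^[n+1] (T ω) ∈ E ∧ S (n+1) (T ω) < (K:ℝ)}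
            = ⋃ n : ℕ, (T ⁻¹' (T^[n+1] ⁻¹' E) ∩ T ⁻¹' {ω | S (n+1) ω < (K:ℝ)}) := by
          ext ω
          simp only [Set.mem_setOf_eq, Set.mem_iUnion, Set.mem_inter_iff, Set.mem_preimage]
        rw [heq]
        exact MeasurableSet.iUnion fun n => (hTm ((hTk (n+1)) hE)).inter
          (hTm (measurableSet_lt (hSm (n+1)) measurable_const))
    have hGoodsub : ∀ K : ℕ, 1 ≤ K → Good K ⊆ Gd K := by
      intro K hK ω hω
      obtain ⟨h1, h2⟩ := hω
      have hK1 : (1:ℝ) ≤ (K:ℝ) := by exact_mod_cast hK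
      constructor
      · have hNge : -(K:ℝ) + 1 ≤ N K ω := by
          apply le_ciInf
          intro n
          simp only [hgdef]
          split_ifs with hh
          · have hs := h1 n hh
            have hmin : -(K:ℝ) + 1 ≤ min (K:ℝ) (S (n+1) ω) := le_min (by linarith) hs
            exact le_trans hmin (le_max_right _ _)
          · linarith
        show -(K:ℝ) < N K ω
        linarith
      · obtain ⟨n, hn1, hn2⟩ := h2
        have hle : N K (T ω) ≤ g K n (T ω) := hNle K n (T ω)
        simp only [hgdef, hn1, if_true] at hle
        have hmax : max (-(K:ℝ)) (min (K:ℝ) (S (n+1) (T ω))) < (K:ℝ) := by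
          apply max_lt (by linarith)
          exact lt_of_le_of_lt (min_le_right _ _) hn2
        show N K (T ω) < (K:ℝ)
        linarith
    have hVmeas : MeasurableSet (⋃ n : ℕ, T^[n] ⁻¹' E) := MeasurableSet.iUnion fun n => (hTk n) hE
    have hV1 : P (⋃ n : ℕ, T^[n] ⁻¹' E) = 1 := by
      have hsub : T ⁻¹' (⋃ n : ℕ, T^[n] ⁻¹' E) ⊆ ⋃ n : ℕ, T^[n] ⁻¹' E := by
        rintro ω hω
        simp only [Set.mem_preimage, Set.mem_iUnion] at hω ⊢
        obtain ⟨n, hn⟩ := hω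
        exact ⟨n+1, by rw [Function.iterate_succ_apply]; exact hn⟩
      rcases hT.ae_empty_or_univ_of_preimage_ae_le hVmeas.nullMeasurableSet
          hsub.eventuallyLE with h | h
      · exfalso
        have h1 : P (⋃ n : ℕ, T^[n] ⁻¹' E) = 0 := by simpa using measure_congr h
        have h2 : E ⊆ ⋃ n : ℕ, T^[n] ⁻¹' E := by
          intro ω hω
          simp only [Set.mem_iUnion]
          exact ⟨0, by simpa using hω⟩
        have h3 := measure_mono (μ := P) h2
        rw [h1] at h3
        exact absurd (lt_of_lt_of_le hEpos h3) (lt_irrefl _)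
      · simpa using measure_congr h
    have hF : ∀ᵐ ω ∂P, ∃ n : ℕ, T^[n+1] (T ω) ∈ E := by
      have h2 : P (T ⁻¹' (T ⁻¹' (⋃ n : ℕ, T^[n] ⁻¹' E))) = 1 := by
        rw [hT.toMeasurePreserving.measure_preimage (hTm hVmeas).nullMeasurableSet,
          hT.toMeasurePreserving.measure_preimage hVmeas.nullMeasurableSet, hV1]
      have heq : {ω : Ω | ¬ ∃ n : ℕ, T^[n+1] (T ω) ∈ E}
          = (T ⁻¹' (T ⁻¹' (⋃ n : ℕ, T^[n] ⁻¹' E)))ᶜ := by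
        ext ω
        simp only [Set.mem_setOf_eq, Set.mem_compl_iff, Set.mem_preimage, Set.mem_iUnion,
          not_exists]
        constructor
        · intro h n hn
          exact h n (by rw [Function.iterate_succ_apply]; exact hn)
        · intro h n hn
          exact h n (by rw [← Function.iterate_succ_apply]; exact hn)
      rw [ae_iff, heq, prob_compl_eq_zero_iff (hTm (hTm hVmeas))]
      exact h2
    have hDout : ∀ᵐ ω ∂P, ω ∉ D := measure_eq_zero_iff_ae_notMem.mp hD0
    have hGoodae : ∀ᵐ ω ∂P, ∃ K0 : ℕ, ∀ K : ℕ, K0 ≤ K → ω ∈ Good K := by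
      filter_upwards [hDout, hF] with ω h1 h2
      rw [hDdef, Set.mem_setOf_eq] at h1
      push_neg at h1
      obtain ⟨C, hC⟩ := h1
      obtain ⟨n0, hn0⟩ := h2
      obtain ⟨K0, hK0⟩ := exists_nat_ge (max (1 - C) (S (n0+1) (T ω) + 1))
      refine ⟨K0, fun K hK => ?_⟩
      have hKK : (K0:ℝ) ≤ (K:ℝ) := by exact_mod_cast hK
      have hK1 : (1:ℝ) - C ≤ (K:ℝ) := le_trans (le_trans (le_max_left _ _) hK0) hKK
      have hK2 : S (n0+1) (T ω) + 1 ≤ (K:ℝ) := le_trans (le_trans (le_max_right _ _) hK0) hKK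
      constructor
      · intro n hn
        have := hC (n+1) (by omega) hn
        linarith
      · exact ⟨n0, hn0, by linarith⟩
    have hDCT : Tendsto (fun K : ℕ => ∫ ω, ((Good K)ᶜ.indicator (fun ω' => |f ω'|)) ω ∂P)
        atTop (𝓝 (∫ ω, (0:ℝ) ∂P)) := by
      apply tendsto_integral_of_dominated_convergence (fun ω => |f ω|)
      · exact fun K => (hfi.abs.aestronglyMeasurable.indicator (hGoodmeas K).compl)
      · exact hfi.abs
      · intro K
        refine Filter.Eventually.of_forall fun ω => ?_
        rw [Real.norm_eq_abs]
        by_cases hmem : ω ∈ (Good K)ᶜ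
        · rw [Set.indicator_of_mem hmem, abs_abs]
        · rw [Set.indicator_of_notMem hmem, abs_zero]
          exact abs_nonneg _
      · filter_upwards [hGoodae] with ω hω
        obtain ⟨K0, hK0⟩ := hω
        refine Tendsto.congr' ?_ tendsto_const_nhds
        rw [Filter.EventuallyEq, eventually_atTop]
        refine ⟨K0, fun K hK => ?_⟩
        rw [Set.indicator_of_notMem (by simpa using hK0 K hK)]
    have hfinal : ∀ K : ℕ, 1 ≤ K →
        (0:ℝ) ≤ ∫ ω, f ω ∂P + ∫ ω, ((Good K)ᶜ.indicator (fun ω' => |f ω'|)) ω ∂P := by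
      intro K hK
      have h2 : ∫ ω, (Gd K).indicator f ω ∂P ≤
          ∫ ω, (f ω + ((Good K)ᶜ.indicator (fun ω' => |f ω'|)) ω) ∂P := by
        apply integral_mono (hfi.indicator (hGdmeas K))
          (hfi.add (hfi.abs.indicator (hGoodmeas K).compl))
        intro ω
        by_cases hmem : ω ∈ Gd K
        · rw [Set.indicator_of_mem hmem]
          have h3 : (0:ℝ) ≤ ((Good K)ᶜ.indicator (fun ω' => |f ω'|)) ω :=
            Set.indicator_nonneg (fun _ _ => abs_nonneg _) ω
          simp only [Pi.add_apply]
          linarith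
        · rw [Set.indicator_of_notMem hmem]
          have hbad : ω ∈ (Good K)ᶜ := fun hg => hmem (hGoodsub K hK hg)
          simp only [Pi.add_apply]
          rw [Set.indicator_of_mem hbad]
          have := neg_abs_le (f ω)
          linarith
      rw [integral_add hfi (hfi.abs.indicator (hGoodmeas K).compl)] at h2
      linarith [hstep1 K]
    have hlim : Tendsto (fun K : ℕ => ∫ ω, f ω ∂P +
        ∫ ω, ((Good K)ᶜ.indicator (fun ω' => |f ω'|)) ω ∂P) atTop (𝓝 (∫ ω, f ω ∂P + 0)) := by
      apply Tendsto.const_add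
      simpa using hDCT
    have hge : (0:ℝ) ≤ ∫ ω, f ω ∂P + 0 :=
      ge_of_tendsto hlim (eventually_atTop.mpr ⟨1, fun K hK => hfinal K hK⟩)
    rw [add_zero] at hge
    linarith
  · have hDc : P Dᶜ = 0 := by
      rw [prob_compl_eq_zero_iff hDmeas]
      have := measure_congr h1
      simpa using this
    rw [ae_iff]
    exact hDc


/-- If the law `P_X` has an atom, then it is purely atomic: `P_X(𝒬) = 1` where `𝒬` is the
countable set of images, under compositions of elements of `S`, of fixed points of those
compositions of elements of `S` that are strict contractions. -/
theorem atom_implies_purely_atomic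
    {Ω : Type*} [MeasurableSpace Ω] (P : Measure Ω) [IsProbabilityMeasure P]
    (T : Ω → Ω) (hT : Ergodic T P)
    (b r : Ω → ℝ) (hb : Measurable b) (hr : Measurable r)
    (hrpos : ∀ ω, 0 < r ω)
    (hbInt : Integrable b P)
    (hlogInt : Integrable (fun ω => Real.log (r ω)) P)
    (hlogNeg : ∫ ω, Real.log (r ω) ∂P < 0)
    (hScount : Set.Countable {p : ℝ × ℝ | ∃ ω, (b ω, r ω) = p})
    (hSpos : ∀ p ∈ {p : ℝ × ℝ | ∃ ω, (b ω, r ω) = p}, 0 < P {ω | (b ω, r ω) = p})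
    (X : Ω → ℝ) (hX : Measurable X)
    (hXsum : ∀ᵐ ω ∂P,
      HasSum (fun n : ℕ => (∏ k ∈ Finset.range n, r (T^[k] ω)) * b (T^[n] ω)) (X ω))
    (ha : ∃ a : ℝ, 0 < P.map X {a}) :
    Set.Countable {y : ℝ | ∃ c ∈ {c : ℝ | ∃ n ≥ 1,
        ∃ p ∈ compSet {p : ℝ × ℝ | ∃ ω, (b ω, r ω) = p} n, p.2 < 1 ∧ p.1 + p.2 * c = c},
      ∃ n : ℕ, ∃ p ∈ compSet {p : ℝ × ℝ | ∃ ω, (b ω, r ω) = p} n, y = p.1 + p.2 * c}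
    ∧ P.map X {y : ℝ | ∃ c ∈ {c : ℝ | ∃ n ≥ 1,
        ∃ p ∈ compSet {p : ℝ × ℝ | ∃ ω, (b ω, r ω) = p} n, p.2 < 1 ∧ p.1 + p.2 * c = c},
      ∃ n : ℕ, ∃ p ∈ compSet {p : ℝ × ℝ | ∃ ω, (b ω, r ω) = p} n, y = p.1 + p.2 * c} = 1 := by
  classical
  set Sset : Set (ℝ × ℝ) := {p : ℝ × ℝ | ∃ ω, (b ω, r ω) = p} with hSsetdef
  set Pfix : Set ℝ := {c : ℝ | ∃ n ≥ 1,
      ∃ p ∈ compSet Sset n, p.2 < 1 ∧ p.1 + p.2 * c = c} with hPfixdef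
  set Q : Set ℝ := {y : ℝ | ∃ c ∈ Pfix,
      ∃ n : ℕ, ∃ p ∈ compSet Sset n, y = p.1 + p.2 * c} with hQdef
  have hcomp : ∀ n, (compSet Sset n).Countable := compSet_countable hScount
  have hPcount : Pfix.Countable := by
    have hsub : Pfix ⊆ ⋃ n : ℕ, (fun p : ℝ × ℝ => p.1 / (1 - p.2)) '' compSet Sset n := by
      rintro c ⟨n, hn1, p, hp, hp2, hfix⟩
      refine Set.mem_iUnion.mpr ⟨n, ⟨p, hp, ?_⟩⟩
      have h12 : 1 - p.2 ≠ 0 := ne_of_gt (by linarith)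
      field_simp
      linarith
    exact Set.Countable.mono hsub (Set.countable_iUnion fun n => (hcomp n).image _)
  have hQcount : Q.Countable := by
    have hsub : Q ⊆ ⋃ c ∈ Pfix, ⋃ n : ℕ, (fun p : ℝ × ℝ => p.1 + p.2 * c) '' compSet Sset n := by
      rintro y ⟨c, hc, n, p, hp, rfl⟩
      exact Set.mem_biUnion hc (Set.mem_iUnion.mpr ⟨n, ⟨p, hp, rfl⟩⟩)
    exact Set.Countable.mono hsub
      (hPcount.biUnion fun c _ => Set.countable_iUnion fun n => (hcomp n).image _)
  refine ⟨hQcount, ?_⟩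
  obtain ⟨a, ha0⟩ := ha
  rw [Measure.map_apply hX (measurableSet_singleton a)] at ha0
  set E : Set Ω := X ⁻¹' {a} with hEdef
  have hEmeas : MeasurableSet E := hX (measurableSet_singleton a)
  have hTm : Measurable T := hT.toMeasurePreserving.measurable
  have hrec1 : ∀ᵐ ω ∂P, X ω = b ω + r ω * X (T ω) := by
    have hXsum' : ∀ᵐ ω ∂P, HasSum
        (fun n : ℕ => (∏ k ∈ Finset.range n, r (T^[k] (T ω))) * b (T^[n] (T ω))) (X (T ω)) :=
      hT.toMeasurePreserving.quasiMeasurePreserving.ae hXsum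
    filter_upwards [hXsum, hXsum'] with ω h1 h2
    have h3 := h2.mul_left (r ω)
    have h4 : (fun n : ℕ => (∏ k ∈ Finset.range (n + 1), r (T^[k] ω)) * b (T^[n + 1] ω)) =
        fun n : ℕ => r ω * ((∏ k ∈ Finset.range n, r (T^[k] (T ω))) * b (T^[n] (T ω))) := by
      funext n
      rw [Finset.prod_range_succ']
      have h5 : ∀ i, r (T^[i + 1] ω) = r (T^[i] (T ω)) := fun i => by
        rw [Function.iterate_succ_apply]
      rw [Finset.prod_congr rfl (fun i _ => h5 i), Function.iterate_zero_apply,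
        Function.iterate_succ_apply]
      ring
    rw [← h4] at h3
    have h6 := (hasSum_nat_add_iff
      (f := fun n : ℕ => (∏ k ∈ Finset.range n, r (T^[k] ω)) * b (T^[n] ω)) 1).mp h3
    simp only [Finset.range_one, Finset.sum_singleton, Finset.prod_range_zero, one_mul,
      Function.iterate_zero_apply] at h6
    have h7 := h1.unique h6
    linarith
  have hrecAll : ∀ᵐ ω ∂P, ∀ k : ℕ,
      X (T^[k] ω) = b (T^[k] ω) + r (T^[k] ω) * X (T^[k + 1] ω) := by
    rw [ae_all_iff]
    intro k
    have hk := (hT.toMeasurePreserving.iterate k).quasiMeasurePreserving.ae hrec1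
    filter_upwards [hk] with ω hω
    rwa [← Function.iterate_succ_apply' T k ω] at hω
  have hflog : Measurable fun ω => Real.log (r ω) := Real.measurable_log.comp hr
  have hhit : ∀ᵐ ω ∂P, ∀ C : ℝ, ∃ n, 1 ≤ n ∧ T^[n] ω ∈ E ∧
      ∑ k ∈ Finset.range n, Real.log (r (T^[k] ω)) < C :=
    ergodic_hitting P T hT _ hflog hlogInt hlogNeg E hEmeas ha0
  have hprod : ∀ (n : ℕ) (ω : Ω), (∑ k ∈ Finset.range n, Real.log (r (T^[k] ω)) < 0) →
      (∏ k ∈ Finset.range n, r (T^[k] ω)) < 1 := by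
    intro n ω hs
    have h1 : (∏ k ∈ Finset.range n, r (T^[k] ω)) =
        Real.exp (∑ k ∈ Finset.range n, Real.log (r (T^[k] ω))) := by
      rw [Real.exp_sum]
      exact Finset.prod_congr rfl fun k _ => (Real.exp_log (hrpos _)).symm
    rw [h1]
    have h2 := Real.exp_lt_exp.mpr hs
    rwa [Real.exp_zero] at h2
  set G : Set Ω := {ω | (∀ k : ℕ, X (T^[k] ω) = b (T^[k] ω) + r (T^[k] ω) * X (T^[k + 1] ω)) ∧
      (∀ C : ℝ, ∃ n, 1 ≤ n ∧ T^[n] ω ∈ E ∧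
        ∑ k ∈ Finset.range n, Real.log (r (T^[k] ω)) < C)} with hGdef
  have hgood : ∀ᵐ ω ∂P, ω ∈ G := by
    filter_upwards [hrecAll, hhit] with ω h1 h2
    exact ⟨h1, h2⟩
  have hGnull : P Gᶜ = 0 := ae_iff.mp hgood
  have hne : (E ∩ G).Nonempty := by
    apply nonempty_of_measure_ne_zero (μ := P)
    intro h0
    have hle : P E ≤ P (E ∩ G) + P Gᶜ := by
      calc P E ≤ P ((E ∩ G) ∪ Gᶜ) := measure_mono (fun ω hω => by
            by_cases h : ω ∈ G
            · exact Or.inl ⟨hω, h⟩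
            · exact Or.inr h)
        _ ≤ P (E ∩ G) + P Gᶜ := measure_union_le _ _
    rw [h0, hGnull, add_zero] at hle
    exact absurd (lt_of_lt_of_le ha0 hle) (lt_irrefl _)
  obtain ⟨ω₀, hω₀E, hω₀rec, hω₀hit⟩ := hne
  obtain ⟨n₀, hn₀1, hn₀E, hn₀S⟩ := hω₀hit 0
  have hXω₀ : X ω₀ = a := hω₀E
  have hXn₀ : X (T^[n₀] ω₀) = a := hn₀E
  have heval₀ := Phi_eval' b r T X n₀ ω₀ hω₀rec
  have hfixa : a ∈ Pfix := by
    refine ⟨n₀, hn₀1, Phi b r T n₀ ω₀, Phi_mem b r T n₀ ω₀, ?_, ?_⟩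
    · rw [Phi_snd]
      exact hprod n₀ ω₀ hn₀S
    · rw [← hXω₀, ← hXn₀] at *
      exact heval₀.symm
  have hae : ∀ᵐ ω ∂P, X ω ∈ Q := by
    filter_upwards [hrecAll, hhit] with ω h1 h2
    obtain ⟨n, hn1, hnE, hnS⟩ := h2 1
    have heval := Phi_eval' b r T X n ω h1
    have hXa : X (T^[n] ω) = a := hnE
    refine ⟨a, hfixa, n, Phi b r T n ω, Phi_mem b r T n ω, ?_⟩
    rw [heval, hXa]
  have hQmeas : MeasurableSet Q := hQcount.measurableSet
  rw [Measure.map_apply hX hQmeas, ← prob_compl_eq_zero_iff (hX hQmeas)]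
  exact ae_iff.mp hae
end

section
/- If α:Ω→ℝ is measurable and satisfies the coboundary equation b(ω)=α(ω)−r(ω)α(Tω) for P-almost every ω, then α=X P-almost everywhere. -/
/-!
Put `D = α - X`; both `α` and `X` solve the coboundary equation, so `D = r · (D ∘ T)` a.e.
Then `{D ≠ 0}` is `T`-invariant, hence null or conull by ergodicity. If it were conull,
`log r = log |D| - log |D ∘ T|` a.e. But for measure-preserving `T`, any integrable `f - f ∘ T`
has integral zero: the truncations of `f` at level `M` are bounded, so `f_M - f_M ∘ T` has
integral zero, and since truncation is 1-Lipschitz these are dominated by `|f - f ∘ T|`.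
This contradicts `∫ log r < 0`.
-/

open MeasureTheory Filter Topology

theorem eq_add_mul_of_hasSum_of_hasSum_comp {Ω R : Type*} [CommRing R] [TopologicalSpace R]
    [IsTopologicalRing R] [T2Space R] {T : Ω → Ω} {b r : Ω → R} {x : Ω} {s t : R}
    (hs : HasSum (fun n => (∏ k ∈ Finset.range n, r (T^[k] x)) * b (T^[n] x)) s)
    (ht : HasSum (fun n => (∏ k ∈ Finset.range n, r (T^[k] (T x))) * b (T^[n] (T x))) t) :
    s = b x + r x * t := by
  have hterm (n : ℕ) : (∏ k ∈ Finset.range (n + 1), r (T^[k] x)) * b (T^[n + 1] x) =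
      r x * ((∏ k ∈ Finset.range n, r (T^[k] (T x))) * b (T^[n] (T x))) := by
    simp only [Finset.prod_range_succ', Function.iterate_succ_apply, Function.iterate_zero_apply]
    ring
  have hshift : HasSum (fun n => (∏ k ∈ Finset.range (n + 1), r (T^[k] x)) * b (T^[n + 1] x))
      (r x * t) := by
    simpa only [hterm] using ht.mul_left (r x)
  simpa [add_comm] using hs.unique ((hasSum_nat_add_iff 1).1 hshift)

section

variable {Ω : Type*} [MeasurableSpace Ω] {μ : Measure Ω} [IsFiniteMeasure μ] {T : Ω → Ω}

theorem MeasureTheory.MeasurePreserving.integral_sub_comp_eq_zero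
    (hT : MeasurePreserving T μ μ) {f : Ω → ℝ} (hf : AEStronglyMeasurable f μ)
    (hint : Integrable (fun x => f x - f (T x)) μ) :
    ∫ x, f x - f (T x) ∂μ = 0 := by
  set c : ℕ → ℝ → ℝ := fun M y => Set.projIcc (-M : ℝ) M (neg_le_self M.cast_nonneg) y
  have hc_cont (M : ℕ) : Continuous (c M) := continuous_subtype_val.comp continuous_projIcc
  have hc_lip (M : ℕ) (y z : ℝ) : |c M y - c M z| ≤ |y - z| := by
    simpa [← Real.dist_eq, Subtype.dist_eq] using
      (LipschitzWith.projIcc (a := -M) (b := M) _).dist_le_mul y z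
  have hc_bound (M : ℕ) (y : ℝ) : |c M y| ≤ M := abs_le.2 (Set.projIcc _ _ _ y).2
  have hc_eventually (y : ℝ) : ∀ᶠ M : ℕ in atTop, c M y = y := by
    filter_upwards [eventually_ge_atTop ⌈|y|⌉₊] with M hM
    have : |y| ≤ M := (Nat.le_ceil _).trans (by exact_mod_cast hM)
    simp [c, Set.projIcc_of_mem _ (abs_le.1 this)]
  have hcf (M : ℕ) : Integrable (fun x => c M (f x)) μ :=
    .of_bound ((hc_cont M).comp_aestronglyMeasurable hf) M (ae_of_all _ (hc_bound M <| f ·))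
  have hcfT (M : ℕ) : Integrable (fun x => c M (f (T x))) μ :=
    hT.integrable_comp_of_integrable (hcf M)
  have h_trunc (M : ℕ) : ∫ x, c M (f x) - c M (f (T x)) ∂μ = 0 := by
    have hcomp : ∫ x, c M (f (T x)) ∂μ = ∫ x, c M (f x) ∂μ := by
      conv_rhs => rw [← hT.map_eq]
      exact (integral_map hT.aemeasurable (by rw [hT.map_eq]; exact (hcf M).1)).symm
    rw [integral_sub (hcf M) (hcfT M), hcomp, sub_self]
  have h_lim : Tendsto (fun M : ℕ => ∫ x, c M (f x) - c M (f (T x)) ∂μ) atTop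
      (𝓝 (∫ x, f x - f (T x) ∂μ)) := by
    refine tendsto_integral_of_dominated_convergence (fun x => |f x - f (T x)|)
      (fun M => ((hcf M).sub (hcfT M)).1) hint.abs
      (fun M => ae_of_all _ fun x => hc_lip M _ _) (ae_of_all _ fun x => ?_)
    exact tendsto_const_nhds.congr' <| ((hc_eventually (f x)).and (hc_eventually (f (T x)))).mono
      fun M h => by simp only [h.1, h.2]
  exact (tendsto_nhds_unique tendsto_const_nhds (h_lim.congr h_trunc)).symm

theorem Ergodic.ae_eq_zero_of_ae_eq_mul_comp (hT : Ergodic T μ)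
    {D r : Ω → ℝ} (hD : Measurable D) (hr : Integrable (fun x => Real.log (r x)) μ)
    (hr₀ : ∫ x, Real.log (r x) ∂μ ≠ 0) (hDr : ∀ᵐ x ∂μ, D x = r x * D (T x)) :
    ∀ᵐ x ∂μ, D x = 0 := by
  have hZ : {x | D x ≠ 0} ≤ᵐ[μ] T ⁻¹' {x | D x ≠ 0} := by
    filter_upwards [hDr] with x hx (hxZ : D x ≠ 0) (hTx : D (T x) = 0)
    exact hxZ (by rw [hx, hTx, mul_zero])
  rcases hT.ae_empty_or_univ_of_ae_le_preimage
    (measurableSet_eq_fun hD measurable_const).compl.nullMeasurableSet hZ with h | h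
  · filter_upwards [h.mem_iff] with x hx
    simpa using hx
  · have hD₀ : ∀ᵐ x ∂μ, D x ≠ 0 := by
      filter_upwards [h.mem_iff] with x hx
      exact hx.2 trivial
    have hlog : (fun x => Real.log (r x)) =ᵐ[μ] fun x => Real.log |D x| - Real.log |D (T x)| := by
      filter_upwards [hDr, hD₀, hT.quasiMeasurePreserving.ae hD₀] with x hx hx₀ hTx₀
      have hrx : r x ≠ 0 := left_ne_zero_of_mul (hx ▸ hx₀)
      rw [hx, abs_mul, Real.log_mul (abs_ne_zero.2 hrx) (abs_ne_zero.2 hTx₀), Real.log_abs]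
      ring
    refine absurd ?_ hr₀
    rw [integral_congr_ae hlog]
    exact hT.toMeasurePreserving.integral_sub_comp_eq_zero
      hD.abs.log.aestronglyMeasurable (hr.congr hlog)

end

theorem coboundary_unique_general
    {Ω : Type*} [MeasurableSpace Ω] (P : Measure Ω) [IsProbabilityMeasure P]
    (T : Ω → Ω) (hT : Ergodic T P)
    (b r : Ω → ℝ)
    (hlogInt : Integrable (fun ω => Real.log (r ω)) P)
    (hlogNeg : ∫ ω, Real.log (r ω) ∂P < 0)
    (X : Ω → ℝ) (hX : Measurable X)
    (hXsum : ∀ᵐ ω ∂P,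
      HasSum (fun n : ℕ => (∏ k ∈ Finset.range n, r (T^[k] ω)) * b (T^[n] ω)) (X ω))
    (α : Ω → ℝ) (hα : Measurable α)
    (hcob : ∀ᵐ ω ∂P, b ω = α ω - r ω * α (T ω)) :
    ∀ᵐ ω ∂P, α ω = X ω := by
  have hX_rec : ∀ᵐ ω ∂P, X ω = b ω + r ω * X (T ω) := by
    filter_upwards [hXsum, hT.quasiMeasurePreserving.ae hXsum] with ω hω hTω
    exact eq_add_mul_of_hasSum_of_hasSum_comp hω hTω
  have hD_rec : ∀ᵐ ω ∂P, α ω - X ω = r ω * (α (T ω) - X (T ω)) := by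
    filter_upwards [hcob, hX_rec] with ω hb hX
    rw [hX, hb]
    ring
  filter_upwards [hT.ae_eq_zero_of_ae_eq_mul_comp (hα.sub hX) hlogInt hlogNeg.ne hD_rec]
    with ω hω
  exact sub_eq_zero.1 hω

/-- If a measurable `α : Ω → ℝ` satisfies the coboundary equation
`b(ω) = α(ω) − r(ω)·α(T ω)` for `P`-almost every `ω`, then `α = X` almost everywhere. -/
theorem coboundary_unique
    {Ω : Type*} [MeasurableSpace Ω] (P : Measure Ω) [IsProbabilityMeasure P]
    (T : Ω → Ω) (hT : Ergodic T P)
    (b r : Ω → ℝ) (hb : Measurable b) (hr : Measurable r)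
    (hrpos : ∀ ω, 0 < r ω)
    (hbInt : Integrable b P)
    (hlogInt : Integrable (fun ω => Real.log (r ω)) P)
    (hlogNeg : ∫ ω, Real.log (r ω) ∂P < 0)
    (X : Ω → ℝ) (hX : Measurable X)
    (hXsum : ∀ᵐ ω ∂P,
      HasSum (fun n : ℕ => (∏ k ∈ Finset.range n, r (T^[k] ω)) * b (T^[n] ω)) (X ω))
    (α : Ω → ℝ) (hα : Measurable α)
    (hcob : ∀ᵐ ω ∂P, b ω = α ω - r ω * α (T ω)) :
    ∀ᵐ ω ∂P, α ω = X ω :=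
  coboundary_unique_general P T hT b r hlogInt hlogNeg X hX hXsum α hα hcob
end

section
/- In the independent (self-similar) case, if P_X has an atom then P_X is a Dirac mass: there exists c∈ℝ with φ(c)=c for every φ∈S and P_X=δ_c. -/
/-!
Because `ω 0` is independent of `X ∘ leftShift` and the shift preserves `P`, the atoms of the law
`μ` of `X` satisfy `μ {a} = ∑ₑ ν {e} * μ {φₑ⁻¹ a}`. Atoms of maximal mass form a finite set, and
since a weighted average of masses at most the maximum can only reach it when every term does,
each `φₑ⁻¹` maps this set into itself. Being strictly increasing, every `φₑ⁻¹` then fixes its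
largest element `c`. Finally `X - c = r(ω 0) * (X ∘ leftShift - c)`, so `{X = c}` is shift-invariant
up to a null set, and ergodicity of the Bernoulli shift (Kolmogorov's zero-one law) gives
`P {X = c} = 1`.
-/

open MeasureTheory ProbabilityTheory Filter

section LeftShift

variable {E : Type*}

def leftShift (ω : ℕ → E) : ℕ → E := fun k => ω (k + 1)

lemma leftShift_iterate_apply (n : ℕ) (ω : ℕ → E) (k : ℕ) : leftShift^[n] ω k = ω (k + n) := by
  induction n generalizing ω with
  | zero => rfl
  | succ n ih => rw [Function.iterate_succ_apply, ih]; rfl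

variable [MeasurableSpace E]

lemma measurable_leftShift : Measurable (leftShift : (ℕ → E) → ℕ → E) :=
  measurable_pi_iff.mpr fun k => measurable_pi_apply (k + 1)

lemma comap_leftShift_iterate_le (n : ℕ) :
    MeasurableSpace.comap (leftShift^[n]) MeasurableSpace.pi ≤
      ⨆ i ∈ Set.Ici n, MeasurableSpace.comap (fun ω : ℕ → E => ω i) ‹_› := by
  rw [MeasurableSpace.pi, MeasurableSpace.comap_iSup]
  refine iSup_le fun k => ?_
  rw [MeasurableSpace.comap_comp]
  have : (fun ω : ℕ → E => ω k) ∘ leftShift^[n] = fun ω => ω (k + n) :=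
    funext fun ω => leftShift_iterate_apply n ω k
  rw [this]
  exact le_iSup₂ (f := fun i (_ : i ∈ Set.Ici n) =>
    MeasurableSpace.comap (fun ω : ℕ → E => ω i) ‹_›) (k + n) (by simp)

variable {P : Measure (ℕ → E)}

lemma measurePreserving_leftShift {ν : Measure E} (hindep : iIndepFun (fun n (ω : ℕ → E) => ω n) P)
    (hlaw : ∀ n, P.map (fun ω : ℕ → E => ω n) = ν) : MeasurePreserving leftShift P P := by
  refine ⟨measurable_leftShift, ?_⟩
  calc P.map leftShift = Measure.infinitePi (fun k => P.map (fun ω : ℕ → E => ω (k + 1))) :=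
        (hindep.precomp (add_left_injective 1)).map_fun_eq_infinitePi_map
          fun k => measurable_pi_apply (k + 1)
    _ = Measure.infinitePi (fun k => P.map (fun ω : ℕ → E => ω k)) := by simp_rw [hlaw]
    _ = P := by
        rw [← hindep.map_fun_eq_infinitePi_map measurable_pi_apply]
        exact Measure.map_id

lemma ergodic_leftShift {ν : Measure E} (hindep : iIndepFun (fun n (ω : ℕ → E) => ω n) P)
    (hlaw : ∀ n, P.map (fun ω : ℕ → E => ω n) = ν) : Ergodic leftShift P := by
  have := hindep.isProbabilityMeasure
  refine ⟨measurePreserving_leftShift hindep hlaw, ⟨fun s hs hinv => ?_⟩⟩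
  -- `s = leftShift^[n] ⁻¹' s` only depends on the coordinates `≥ n`, for every `n`
  have htail : MeasurableSet[limsup (fun n => MeasurableSpace.comap (fun ω : ℕ → E => ω n) ‹_›)
      atTop] s := by
    rw [limsup_eq_iInf_iSup_of_nat]
    refine MeasurableSpace.measurableSet_iInf.mpr fun n => comap_leftShift_iterate_le n _ ?_
    exact ⟨s, hs, Function.IsFixedPt.preimage_iterate hinv n⟩
  rw [eventuallyConst_set', ae_eq_empty, ae_eq_univ, prob_compl_eq_zero_iff hs]
  exact measure_zero_or_one_of_measurableSet_limsup_atTop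
    (fun n => (measurable_pi_apply n).comap_le) hindep.iIndep htail

lemma indepFun_eval_zero_leftShift (hindep : iIndepFun (fun n (ω : ℕ → E) => ω n) P) :
    IndepFun (fun ω : ℕ → E => ω 0) leftShift P := by
  have h := indep_iSup_of_disjoint (fun n => (measurable_pi_apply n).comap_le) hindep.iIndep
    (S := {0}) (T := Set.Ici 1) (by simp)
  refine indep_of_indep_of_le_right (indep_of_indep_of_le_left h ?_) ?_
  · exact le_iSup₂ (f := fun i (_ : i ∈ ({0} : Set ℕ)) =>
      MeasurableSpace.comap (fun ω : ℕ → E => ω i) ‹_›) 0 rfl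
  · exact comap_leftShift_iterate_le 1

end LeftShift

lemma hasSum_prod_range_mul_of_succ {r b : ℕ → ℝ} {y : ℝ}
    (h : HasSum (fun n => (∏ k ∈ Finset.range n, r (k + 1)) * b (n + 1)) y) :
    HasSum (fun n => (∏ k ∈ Finset.range n, r k) * b n) (b 0 + r 0 * y) := by
  have hshift : (fun n => (∏ k ∈ Finset.range (n + 1), r k) * b (n + 1)) =
      fun n => r 0 * ((∏ k ∈ Finset.range n, r (k + 1)) * b (n + 1)) := by
    funext n
    rw [Finset.prod_range_succ', mul_comm _ (r 0), mul_assoc]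
  have h' := (hasSum_nat_add_iff (f := fun n => (∏ k ∈ Finset.range n, r k) * b n) 1).mp
    (hshift ▸ h.mul_left (r 0))
  rwa [Finset.sum_range_one, Finset.prod_range_zero, one_mul, add_comm] at h'

lemma ENNReal.eq_of_tsum_mul_eq_of_le {ι : Type*} {w f : ι → ENNReal} {M : ENNReal}
    (hw : ∑' i, w i = 1) (hw0 : ∀ i, w i ≠ 0) (hM : M ≠ ⊤) (hf : ∀ i, f i ≤ M)
    (hsum : ∑' i, w i * f i = M) (i : ι) : f i = M := by
  by_contra hne
  have hwi : w i ≠ ⊤ := ne_top_of_le_ne_top ENNReal.one_ne_top (hw ▸ ENNReal.le_tsum i)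
  have hlt : ∑' j, w j * f j < ∑' j, w j * M :=
    ENNReal.tsum_lt_tsum (hsum ▸ hM) (fun j => mul_le_mul_right (hf j) _)
      (ENNReal.mul_lt_mul_right (hw0 i) hwi (lt_of_le_of_ne (hf i) hne))
  rw [ENNReal.tsum_mul_right, hw, one_mul, hsum] at hlt
  exact lt_irrefl M hlt

lemma Set.Finite.apply_eq_of_isGreatest {α : Type*} [LinearOrder α] {f : α → α} (hf : StrictMono f)
    {s : Set α} (hs : s.Finite) {c : α} (hc : IsGreatest s c) (hmaps : Set.MapsTo f s s) :
    f c = c := by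
  obtain ⟨a, ha, rfl⟩ := ((hs.injOn_iff_bijOn_of_mapsTo hmaps).mp hf.injective.injOn).surjOn hc.1
  exact le_antisymm (hc.2 (hmaps hc.1)) (hf.monotone (hc.2 ha))

namespace MeasureTheory.Measure

variable {α : Type*} [MeasurableSpace α] [MeasurableSingletonClass α] (μ : Measure α)
  [IsFiniteMeasure μ]

lemma finite_setOf_le_measure_singleton {ε : ENNReal} (hε : ε ≠ 0) :
    {a : α | ε ≤ μ {a}}.Finite := by
  refine Measure.finite_const_le_meas_of_disjoint_iUnion μ (pos_iff_ne_zero.mpr hε)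
    measurableSet_singleton (fun a b hab => Set.disjoint_singleton.mpr hab) ?_
  rw [Set.iUnion_of_singleton]
  exact measure_ne_top μ _

lemma exists_forall_measure_singleton_le {a₀ : α} (ha₀ : μ {a₀} ≠ 0) :
    ∃ c, ∀ a, μ {a} ≤ μ {c} := by
  obtain ⟨c, hc, hmax⟩ := Set.exists_max_image {a | μ {a₀} ≤ μ {a}} (fun a => μ {a})
    (μ.finite_setOf_le_measure_singleton ha₀) ⟨a₀, le_refl (μ {a₀})⟩
  refine ⟨c, fun a => ?_⟩
  by_cases ha : μ {a₀} ≤ μ {a}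
  · exact hmax a ha
  · exact (not_le.mp ha).le.trans hc

end MeasureTheory.Measure

section SelfSimilar

variable {E : Type*} [MeasurableSpace E] [Countable E] [MeasurableSingletonClass E]

lemma map_apply_singleton_eq_tsum_of_indepFun {Ω : Type*} [MeasurableSpace Ω] {P : Measure Ω}
    {ξ : Ω → E} {Y Z : Ω → ℝ} (hξ : Measurable ξ) (hY : Measurable Y) (hZ : Measurable Z)
    (hind : IndepFun ξ Z P) {b r : E → ℝ} (hr : ∀ e, r e ≠ 0)
    (hYZ : ∀ᵐ ω ∂P, Y ω = b (ξ ω) + r (ξ ω) * Z ω) (a : ℝ) :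
    P.map Y {a} = ∑' e, P.map ξ {e} * P.map Z {(a - b e) / r e} := by
  have hfiber : Y ⁻¹' {a} =ᵐ[P] ⋃ e, ξ ⁻¹' {e} ∩ Z ⁻¹' {(a - b e) / r e} := by
    filter_upwards [hYZ] with ω hω
    change (ω ∈ Y ⁻¹' {a}) = (ω ∈ ⋃ e, ξ ⁻¹' {e} ∩ Z ⁻¹' {(a - b e) / r e})
    simp only [Set.mem_preimage, Set.mem_singleton_iff, Set.mem_iUnion, Set.mem_inter_iff,
      exists_eq_left', hω, eq_div_iff (hr (ξ ω)), eq_sub_iff_add_eq', mul_comm (Z ω)]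
  have hdisj : Pairwise (Function.onFun Disjoint fun e => ξ ⁻¹' {e} ∩ Z ⁻¹' {(a - b e) / r e}) :=
    fun e e' hne => (((Set.disjoint_singleton.mpr hne).preimage ξ).inter_left _).inter_right _
  rw [Measure.map_apply hY (measurableSet_singleton a), measure_congr hfiber,
    measure_iUnion hdisj fun e => (hξ (measurableSet_singleton e)).inter
      (hZ (measurableSet_singleton _))]
  refine tsum_congr fun e => ?_
  rw [hind.measure_inter_preimage_eq_mul _ _ (measurableSet_singleton e)
      (measurableSet_singleton _), Measure.map_apply hξ (measurableSet_singleton e),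
    Measure.map_apply hZ (measurableSet_singleton _)]

lemma exists_fixedPoint_of_measure_singleton_eq_tsum (μ : Measure ℝ) [IsFiniteMeasure μ]
    (ν : Measure E) [IsProbabilityMeasure ν] (hν : ∀ e, ν {e} ≠ 0) {b r : E → ℝ}
    (hr : ∀ e, 0 < r e) (hμ : ∀ a, μ {a} = ∑' e, ν {e} * μ {(a - b e) / r e}) {a₀ : ℝ}
    (ha₀ : μ {a₀} ≠ 0) : ∃ c, μ {c} ≠ 0 ∧ ∀ e, b e + r e * c = c := by
  obtain ⟨c₀, hc₀⟩ := μ.exists_forall_measure_singleton_le ha₀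
  have hc₀_ne : μ {c₀} ≠ 0 := ne_bot_of_le_ne_bot ha₀ (hc₀ a₀)
  set A := {a | μ {a} = μ {c₀}}
  have hA : A.Finite := (μ.finite_setOf_le_measure_singleton hc₀_ne).subset fun a ha => ha.ge
  have hν_sum : ∑' e, ν {e} = 1 := by
    simpa using Measure.tsum_indicator_apply_singleton ν Set.univ MeasurableSet.univ
  have hmaps : ∀ e, Set.MapsTo (fun a => (a - b e) / r e) A A := fun e a ha =>
    ENNReal.eq_of_tsum_mul_eq_of_le hν_sum hν (measure_ne_top μ _) (fun _ => hc₀ _)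
      ((hμ a).symm.trans ha) e
  obtain ⟨c, hcA, hc⟩ := Set.exists_max_image A id hA ⟨c₀, rfl⟩
  refine ⟨c, hcA.symm ▸ hc₀_ne, fun e => ?_⟩
  have hfix := hA.apply_eq_of_isGreatest (fun x y hxy => div_lt_div_of_pos_right
    (sub_lt_sub_right hxy _) (hr e)) ⟨hcA, hc⟩ (hmaps e)
  rw [div_eq_iff (hr e).ne'] at hfix
  linarith

end SelfSimilar

theorem independent_atom_implies_dirac_general
    {E : Type*} [Countable E] [MeasurableSpace E] [MeasurableSingletonClass E]
    (ν : Measure E) [IsProbabilityMeasure ν] (hν : ∀ e : E, 0 < ν {e})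
    (P : Measure (ℕ → E)) [IsProbabilityMeasure P]
    (hindep : iIndepFun
      (fun n (ω : ℕ → E) => ω n) P)
    (hlaw : ∀ n : ℕ, P.map (fun ω : ℕ → E => ω n) = ν)
    (b0 r0 : E → ℝ) (hr0 : ∀ e, 0 < r0 e)
    (X : (ℕ → E) → ℝ) (hX : Measurable X)
    (hXsum : ∀ᵐ ω ∂P, HasSum
      (fun n : ℕ => (∏ k ∈ Finset.range n, r0 (ω k)) * b0 (ω n)) (X ω))
    (ha : ∃ a : ℝ, 0 < P.map X {a}) :
    ∃ c : ℝ, (∀ e : E, b0 e + r0 e * c = c) ∧ P.map X = Measure.dirac c := by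
  have hT := ergodic_leftShift hindep hlaw
  have hrec : ∀ᵐ ω ∂P, X ω = b0 (ω 0) + r0 (ω 0) * X (leftShift ω) := by
    filter_upwards [hXsum, hT.quasiMeasurePreserving.ae hXsum] with ω h h'
    exact h.unique (hasSum_prod_range_mul_of_succ h')
  have hatom (a : ℝ) : P.map X {a} = ∑' e, ν {e} * P.map X {(a - b0 e) / r0 e} := by
    have hlawT : P.map (X ∘ leftShift) = P.map X := by
      rw [← Measure.map_map hX measurable_leftShift, hT.map_eq]
    have h := map_apply_singleton_eq_tsum_of_indepFun (measurable_pi_apply 0) hX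
      (hX.comp measurable_leftShift) ((indepFun_eval_zero_leftShift hindep).comp measurable_id hX)
      (fun e => (hr0 e).ne') hrec a
    rwa [hlaw 0, hlawT] at h
  obtain ⟨a, ha⟩ := ha
  obtain ⟨c, hc, hfix⟩ := exists_fixedPoint_of_measure_singleton_eq_tsum (P.map X) ν
    (fun e => (hν e).ne') hr0 hatom ha.ne'
  have hinv : leftShift ⁻¹' (X ⁻¹' {c}) =ᵐ[P] X ⁻¹' {c} := by
    filter_upwards [hrec] with ω hω
    change (X (leftShift ω) = c) = (X ω = c)
    conv_rhs => rw [hω, ← hfix (ω 0)]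
    rw [add_right_inj, mul_right_inj' (hr0 (ω 0)).ne']
  have hXc : ∀ᵐ ω ∂P, X ω = c := by
    refine (hT.quasiErgodic.ae_mem_or_ae_notMem₀
      (hX (measurableSet_singleton c)).nullMeasurableSet hinv).resolve_right fun hnull => hc ?_
    rwa [Measure.map_apply hX (measurableSet_singleton c), measure_eq_zero_iff_ae_notMem]
  refine ⟨c, hfix, ?_⟩
  rw [Measure.map_congr hXc, Measure.map_const, measure_univ, one_smul]

/-- **Independent (self-similar) case.** On `Ω = E^ℕ` with the left shift `T` and a product
measure `P = ν^{⊗ℕ}` (formalized by: the coordinates are independent, each with law `ν`),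
if `b` and `r` depend only on the first coordinate and the law of
`X(ω) = ∑ r_n(ω) b(T^n ω)` has an atom, then it is a Dirac mass `δ_c` at a common fixed
point `c` of all the affine maps `φ_ω : y ↦ b(ω) + r(ω) y`. -/
theorem independent_atom_implies_dirac
    {E : Type*} [Countable E] [MeasurableSpace E] [MeasurableSingletonClass E]
    (ν : Measure E) [IsProbabilityMeasure ν] (hν : ∀ e : E, 0 < ν {e})
    (P : Measure (ℕ → E)) [IsProbabilityMeasure P]
    (hindep : iIndepFun
      (fun n (ω : ℕ → E) => ω n) P)
    (hlaw : ∀ n : ℕ, P.map (fun ω : ℕ → E => ω n) = ν)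
    (b0 r0 : E → ℝ) (hr0 : ∀ e, 0 < r0 e)
    (hbInt : Integrable (fun ω : ℕ → E => b0 (ω 0)) P)
    (hlogInt : Integrable (fun ω : ℕ → E => Real.log (r0 (ω 0))) P)
    (hlogNeg : ∫ ω : ℕ → E, Real.log (r0 (ω 0)) ∂P < 0)
    (X : (ℕ → E) → ℝ) (hX : Measurable X)
    (hXsum : ∀ᵐ ω ∂P, HasSum
      (fun n : ℕ => (∏ k ∈ Finset.range n, r0 (ω k)) * b0 (ω n)) (X ω))
    (ha : ∃ a : ℝ, 0 < P.map X {a}) :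
    ∃ c : ℝ, (∀ e : E, b0 e + r0 e * c = c) ∧ P.map X = Measure.dirac c :=
  independent_atom_implies_dirac_general ν hν P hindep hlaw b0 r0 hr0 X hX hXsum ha
end

section
/- Let λ∈(0,1) and suppose r(ω)=λ for all ω. Let p≥1 and α₀,…,α_p∈ℝ satisfy ∑_{k=0}^{p} α_k λ^{p−k}=0. Let g∈L¹(P) and define b(ω)=∑_{k=0}^{p} α_k g(T^kω). Then P-almost everywhere, X(ω)=∑_{n=0}^{p−1} (∑_{k=0}^{n} α_k λ^{n−k}) g(T^nω). In particular, if g has countable range, then P_X is purely atomic. -/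
/-!
Write `A(z) = ∑ₖ aₖ zᵏ`. The relation `∑ₖ aₖ λ^{p-k} = 0` says `A(1/λ) = 0`, so
`A(z) = (1 - λz) C(z)` for a polynomial `C` of degree `< p`, whose coefficients `Cₙ` are the
coefficients in the claimed formula. On the level of functions this says that
`b = Y - λ (Y ∘ T)` with `Y = ∑ₙ Cₙ (g ∘ Tⁿ)`, so the partial sums of `∑ λⁿ b ∘ Tⁿ` telescope to
`Y - λᴺ (Y ∘ Tᴺ)`. Since `Y` is integrable and `T` preserves `P`, the series `∑ λⁿ |Y ∘ Tⁿ|` has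
finite integral, hence its terms tend to `0` almost everywhere, and `X = Y` almost everywhere.
If `g` has countable range, so does `Y`, and the law of `X` lives on that countable set.
-/

open MeasureTheory Filter Topology Finset

section Algebra

variable {R : Type*} [CommRing R]

/-- The `n`-th coefficient of the power series `(∑ₖ aₖ zᵏ) / (1 - λz)`. -/
def geomConv (a : ℕ → R) (lam : R) (n : ℕ) : R :=
  ∑ k ∈ range (n + 1), a k * lam ^ (n - k)

theorem geomConv_zero (a : ℕ → R) (lam : R) : geomConv a lam 0 = a 0 := by
  simp [geomConv]

theorem geomConv_succ (a : ℕ → R) (lam : R) (n : ℕ) :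
    geomConv a lam (n + 1) = lam * geomConv a lam n + a (n + 1) := by
  rw [geomConv, sum_range_succ, Nat.sub_self, pow_zero, mul_one, geomConv, mul_sum]
  congr 1
  refine sum_congr rfl fun k hk => ?_
  rw [Nat.sub_add_comm (Nat.lt_succ_iff.mp (mem_range.mp hk)), pow_succ]
  ring

theorem sum_geomConv_mul_sub (a G : ℕ → R) (lam : R) (N : ℕ) :
    ∑ n ∈ range (N + 1), geomConv a lam n * G n
        - lam * ∑ n ∈ range N, geomConv a lam n * G (n + 1)
      = ∑ k ∈ range (N + 1), a k * G k := by
  induction N with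
  | zero => simp [geomConv_zero]
  | succ N ih =>
    rw [sum_range_succ (fun n => geomConv a lam n * G n) (N + 1),
      sum_range_succ (fun n => geomConv a lam n * G (n + 1)) N,
      sum_range_succ (fun k => a k * G k) (N + 1), ← ih, geomConv_succ]
    ring

theorem sum_geomConv_mul_sub_of_geomConv_eq_zero {a : ℕ → R} {lam : R} {p : ℕ}
    (h : geomConv a lam p = 0) (G : ℕ → R) :
    ∑ n ∈ range p, geomConv a lam n * G n - lam * ∑ n ∈ range p, geomConv a lam n * G (n + 1)
      = ∑ k ∈ range (p + 1), a k * G k := by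
  rw [← sum_geomConv_mul_sub, sum_range_succ _ p, h, zero_mul, add_zero]

end Algebra

theorem Set.Countable.range_finset_sum {ι Ω M : Type*} [AddCommMonoid M] (s : Finset ι)
    {f : ι → Ω → M} (hf : ∀ i ∈ s, (Set.range (f i)).Countable) :
    (Set.range fun ω => ∑ i ∈ s, f i ω).Countable := by
  classical
  induction s using Finset.induction_on with
  | empty => exact (Set.countable_singleton 0).mono Set.range_const_subset
  | insert i s hi ih =>
    simp_rw [sum_insert hi]
    refine ((hf i (mem_insert_self i s)).image2 (ih fun j hj => hf j (Finset.mem_insert_of_mem hj))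
      (· + ·)).mono ?_
    rintro _ ⟨ω, rfl⟩
    exact Set.mem_image2_of_mem (Set.mem_range_self ω) (Set.mem_range_self ω)

theorem sum_range_pow_mul_comp_iterate_of_eq_sub {Ω R : Type*} [Ring R] {T : Ω → Ω} {lam : R}
    {Y b : Ω → R} (hY : ∀ ω, Y ω - lam * Y (T ω) = b ω) (ω : Ω) (N : ℕ) :
    ∑ n ∈ range N, lam ^ n * b (T^[n] ω) = Y ω - lam ^ N * Y (T^[N] ω) := by
  have htelescope := sum_range_sub' (fun n => lam ^ n * Y (T^[n] ω)) N
  simp only [pow_zero, one_mul, Function.iterate_zero_apply] at htelescope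
  rw [← htelescope]
  refine sum_congr rfl fun n _ => ?_
  rw [← hY, Function.iterate_succ_apply', pow_succ, mul_sub, mul_assoc]

theorem MeasureTheory.MeasurePreserving.ae_tendsto_pow_smul_comp_iterate_zero
    {Ω 𝕜 E : Type*} [MeasurableSpace Ω] {μ : Measure Ω}
    [NormedField 𝕜] [NormedAddCommGroup E] [NormedSpace 𝕜 E]
    {T : Ω → Ω} (hT : MeasurePreserving T μ μ) {f : Ω → E} (hf : Integrable f μ)
    {r : 𝕜} (hr : ‖r‖ < 1) :
    ∀ᵐ ω ∂μ, Tendsto (fun n => r ^ n • f (T^[n] ω)) atTop (𝓝 0) := by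
  have hnorm : ∀ n : ℕ, eLpNorm (r ^ n • (f ∘ T^[n])) 1 μ = ‖r‖ₑ ^ n * eLpNorm f 1 μ := by
    intro n
    rw [eLpNorm_const_smul, enorm_pow, eLpNorm_comp_measurePreserving hf.1 (hT.iterate n)]
  have hsum : ∑' n, eLpNorm (r ^ n • (f ∘ T^[n])) 1 μ ≠ ⊤ := by
    simp_rw [hnorm]
    rw [ENNReal.tsum_mul_right, ENNReal.tsum_geometric]
    refine ENNReal.mul_ne_top (ENNReal.inv_ne_top.mpr ?_)
      (memLp_one_iff_integrable.2 hf).eLpNorm_ne_top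
    rw [Ne, tsub_eq_zero_iff_le, not_le, ← ofReal_norm, ENNReal.ofReal_lt_one]
    exact hr
  filter_upwards [summable_norm_of_tsum_eLpNorm_ne_top le_rfl
    (fun n => (((hT.iterate n).integrable_comp_of_integrable hf).smul (r ^ n)).1) hsum] with ω hω
  exact tendsto_zero_iff_norm_tendsto_zero.2 hω.tendsto_atTop_zero

theorem MeasureTheory.map_range_eq_one_of_ae_eq {Ω E : Type*} [MeasurableSpace Ω]
    [MeasurableSpace E] [MeasurableSingletonClass E]
    {P : Measure Ω} [IsProbabilityMeasure P] {X Y : Ω → E} (hX : Measurable X)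
    (hY : (Set.range Y).Countable) (hXY : ∀ᵐ ω ∂P, X ω = Y ω) :
    P.map X (Set.range Y) = 1 := by
  rw [Measure.map_apply hX hY.measurableSet, ← measure_univ (μ := P)]
  exact (ae_mem_iff_measure_eq (hX hY.measurableSet).nullMeasurableSet).1
    (hXY.mono fun ω hω => ⟨ω, hω.symm⟩)

theorem algebraic_relation_gives_atomic_law_general
    {Ω : Type*} [MeasurableSpace Ω] (P : Measure Ω) [IsProbabilityMeasure P]
    (T : Ω → Ω) (hT : Ergodic T P)
    (lam : ℝ) (hlam : lam ∈ Set.Ioo (0 : ℝ) 1)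
    (p : ℕ) (a : ℕ → ℝ)
    (hrel : ∑ k ∈ Finset.range (p + 1), a k * lam ^ (p - k) = 0)
    (g : Ω → ℝ) (hgInt : Integrable g P)
    (b : Ω → ℝ) (hb : ∀ ω, b ω = ∑ k ∈ Finset.range (p + 1), a k * g (T^[k] ω))
    (X : Ω → ℝ) (hX : Measurable X)
    (hXsum : ∀ᵐ ω ∂P, HasSum (fun n : ℕ => lam ^ n * b (T^[n] ω)) (X ω)) :
    (∀ᵐ ω ∂P, X ω = ∑ n ∈ Finset.range p,
        (∑ k ∈ Finset.range (n + 1), a k * lam ^ (n - k)) * g (T^[n] ω))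
    ∧ (Set.Countable (Set.range g) →
        ∃ s : Set ℝ, s.Countable ∧ P.map X s = 1) := by
  set Y : Ω → ℝ := fun ω => ∑ n ∈ range p, geomConv a lam n * g (T^[n] ω)
  have hMP : MeasurePreserving T P P := hT.toMeasurePreserving
  have hYcob : ∀ ω, Y ω - lam * Y (T ω) = b ω := fun ω => by
    rw [hb]
    exact sum_geomConv_mul_sub_of_geomConv_eq_zero hrel fun n => g (T^[n] ω)
  have hYint : Integrable Y P := integrable_finsetSum _ fun n _ =>
    ((hMP.iterate n).integrable_comp_of_integrable hgInt).const_mul _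
  have hlam' : ‖lam‖ < 1 := abs_lt.2 ⟨by linarith [hlam.1], hlam.2⟩
  have hXY : ∀ᵐ ω ∂P, X ω = Y ω := by
    filter_upwards [hXsum, hMP.ae_tendsto_pow_smul_comp_iterate_zero hYint hlam'] with ω hXω hω
    refine tendsto_nhds_unique hXω.tendsto_sum_nat ?_
    simp_rw [sum_range_pow_mul_comp_iterate_of_eq_sub hYcob]
    simpa using (tendsto_const_nhds (x := Y ω)).sub hω
  refine ⟨hXY, fun hg => ?_⟩
  have hYc : (Set.range Y).Countable := Set.Countable.range_finset_sum _ fun n _ =>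
    (hg.image (geomConv a lam n * ·)).mono <| by
      rintro _ ⟨ω, rfl⟩
      exact Set.mem_image_of_mem _ (Set.mem_range_self _)
  exact ⟨Set.range Y, hYc, map_range_eq_one_of_ae_eq hX hYc hXY⟩

/-- If `r ≡ λ ∈ (0,1)` and `b = ∑_{k=0}^p α_k · g ∘ T^k` where `∑_{k=0}^p α_k λ^{p−k} = 0`,
then `X(ω) = ∑_{n=0}^{p−1} (∑_{k=0}^n α_k λ^{n−k}) g(T^n ω)` almost everywhere; in particular,
if `g` has countable range then the law of `X` is purely atomic. -/
theorem algebraic_relation_gives_atomic_law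
    {Ω : Type*} [MeasurableSpace Ω] (P : Measure Ω) [IsProbabilityMeasure P]
    (T : Ω → Ω) (hT : Ergodic T P)
    (lam : ℝ) (hlam : lam ∈ Set.Ioo (0 : ℝ) 1)
    (p : ℕ) (hp : 1 ≤ p) (a : ℕ → ℝ)
    (hrel : ∑ k ∈ Finset.range (p + 1), a k * lam ^ (p - k) = 0)
    (g : Ω → ℝ) (hg : Measurable g) (hgInt : Integrable g P)
    (b : Ω → ℝ) (hb : ∀ ω, b ω = ∑ k ∈ Finset.range (p + 1), a k * g (T^[k] ω))
    (X : Ω → ℝ) (hX : Measurable X)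
    (hXsum : ∀ᵐ ω ∂P, HasSum (fun n : ℕ => lam ^ n * b (T^[n] ω)) (X ω)) :
    (∀ᵐ ω ∂P, X ω = ∑ n ∈ Finset.range p,
        (∑ k ∈ Finset.range (n + 1), a k * lam ^ (n - k)) * g (T^[n] ω))
    ∧ (Set.Countable (Set.range g) →
        ∃ s : Set ℝ, s.Countable ∧ P.map X s = 1) :=
  algebraic_relation_gives_atomic_law_general P T hT lam hlam p a hrel g hgInt b hb X hX hXsum
end

section
/- If X is continuous at every d_{0,k}, i.e. X(d_{0,k})=X(d_{0,k}⁻) for all 1≤k≤K, then X is constant on each interval of the partition of 𝕋 determined by the finite set {T^p d_{0,k} : 0≤p≤p_k, 1≤k≤K}; consequently P_X is purely atomic and its support has at most ∑_{1≤k≤K}(1+p_k) elements. -/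
/-!
The partial sums `S_m = ∑_{n<m} r_n b∘Tⁿ` are step functions, jumping only at the points `z` with
`T^l z ∈ 𝒟` for some `l < m` (at most `N m` of them in any arc of length `≤ 1`), and
`|X - S_m| ≤ C ρ^m` with `ρ = max r < 1`. Since `S_{m+1} = b + r · S_m ∘ T` and `b`, `r` do not
jump off `𝒟`, the jump of `S_m` at a point `z` off the grid `{T^p d_{0,k}}` is carried along the
orbit of `z`, shrinking by `ρ` at each step, until the orbit first meets `𝒟`. This first visit
is at a bottom point `d_{0,k}` (a visit to `T^p d_{0,k}`, `p > 0`, would be preceded by one to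
`d_{0,k}`, or `z` would be on the grid), where the left-continuity of `X` bounds the jump of
`S_m` by `2 C ρ^m`. On a grid-free interval, `X(y) - X(x)` is therefore `O(m ρ^m)`, hence `0`:
`X` is a step function taking only the values `X(T^p d_{0,k})`.
-/

open MeasureTheory Filter Topology

/-- The random series `X(x) = ∑_{n≥0} r_n(x) b(x + nα)` above the rotation by `α`,
where `r_n(x) = r(x) r(x+α) ⋯ r(x+(n−1)α)`; the circle is modelled as `ℝ` with
`1`-periodic data. -/
noncomputable def Xser (α : ℝ) (b r : ℝ → ℝ) (x : ℝ) : ℝ :=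
  ∑' n : ℕ, (∏ k ∈ Finset.range n, r (x + k * α)) * b (x + n * α)

/-- The arc `[d_i, d_{i+1})` of the circle (cyclically: the last arc is `[d_{N-1}, d_0 + 1)`),
viewed in `ℝ`. -/
def arc {N : ℕ} [NeZero N] (d : Fin N → ℝ) (i : Fin N) : Set ℝ :=
  if (i : ℕ) + 1 = N then Set.Ico (d i) (d (i + 1) + 1) else Set.Ico (d i) (d (i + 1))

open Set

def intCosets {ι : Type*} (e : ι → ℝ) : Set ℝ :=
  range fun p : ι × ℤ => e p.1 + p.2

def ConstOnGaps (S : Set ℝ) (g : ℝ → ℝ) : Prop :=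
  ∀ ⦃x y : ℝ⦄, x ≤ y → Disjoint (Ioc x y) S → g x = g y

section IntCosets

variable {ι : Type*} {e : ι → ℝ}

lemma add_intCast_mem_intCosets (q : ι) (k : ℤ) : e q + k ∈ intCosets e := ⟨(q, k), rfl⟩

lemma exists_toIocMod_one_eq_add_intCast (a v : ℝ) : ∃ k : ℤ, toIocMod one_pos a v = v + k :=
  ⟨-toIocDiv one_pos a v, by rw [← self_sub_toIocDiv_zsmul]; simp [sub_eq_add_neg]⟩

lemma toIocMod_one_mem_intCosets (a : ℝ) (q : ι) : toIocMod one_pos a (e q) ∈ intCosets e := by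
  obtain ⟨k, hk⟩ := exists_toIocMod_one_eq_add_intCast a (e q)
  exact hk ▸ add_intCast_mem_intCosets q k

lemma toIocMod_one_eq {a u v : ℝ} {k : ℤ} (hu : u = v + k) (h : u ∈ Ioc a (a + 1)) :
    toIocMod one_pos a v = u :=
  (toIocMod_eq_iff one_pos).2 ⟨h, -k, by simp [hu]⟩

lemma toIcoMod_one_eq {a u v : ℝ} {k : ℤ} (hu : u = v + k) (h : u ∈ Ico a (a + 1)) :
    toIcoMod one_pos a v = u :=
  (toIcoMod_eq_iff one_pos).2 ⟨h, -k, by simp [hu]⟩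

lemma exists_finset_eq_intCosets_inter_Ioc [Finite ι] {x y : ℝ} (hy : y ≤ x + 1) :
    ∃ P : Finset ℝ, P.card ≤ Nat.card ι ∧ intCosets e ∩ Ioc x y = P := by
  classical
  have := Fintype.ofFinite ι
  refine ⟨(Finset.univ.image fun q => toIocMod one_pos x (e q)).filter (· ≤ y),
    (Finset.card_filter_le _ _).trans (Finset.card_image_le.trans_eq Nat.card_eq_fintype_card.symm),
    ?_⟩
  ext u
  simp only [mem_inter_iff, mem_Ioc, Finset.coe_filter, Finset.mem_image, Finset.mem_univ,
    true_and, mem_ofPred_eq]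
  constructor
  · rintro ⟨⟨⟨q, k⟩, rfl⟩, hxu, huy⟩
    exact ⟨⟨q, toIocMod_one_eq rfl ⟨hxu, huy.trans hy⟩⟩, huy⟩
  · rintro ⟨⟨q, rfl⟩, huy⟩
    exact ⟨toIocMod_one_mem_intCosets x q, (toIocMod_mem_Ioc one_pos x (e q)).1, huy⟩

lemma exists_disjoint_Ioo_intCosets [Finite ι] (z : ℝ) :
    ∃ w < z, Disjoint (Ioo w z) (intCosets e) := by
  classical
  have := Fintype.ofFinite ι
  set T : Finset ℝ := insert (z - 1) (Finset.univ.image fun q => toIcoMod one_pos (z - 1) (e q))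
  have hT : T.Nonempty := Finset.insert_nonempty _ _
  refine ⟨T.max' hT, (Finset.max'_lt_iff _ hT).2 ?_, ?_⟩
  · simp only [T, Finset.mem_insert, Finset.mem_image, Finset.mem_univ, true_and]
    rintro t (rfl | ⟨q, rfl⟩)
    · linarith
    · simpa using (toIcoMod_mem_Ico one_pos (z - 1) (e q)).2
  · rw [Set.disjoint_left]
    rintro u ⟨hwu, huz⟩ ⟨⟨q, k⟩, rfl⟩
    have hz1 : z - 1 ≤ T.max' hT := T.le_max' _ (Finset.mem_insert_self _ _)
    have hmem : toIcoMod one_pos (z - 1) (e q) ∈ T :=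
      Finset.mem_insert_of_mem (Finset.mem_image_of_mem _ (Finset.mem_univ q))
    rw [toIcoMod_one_eq rfl ⟨by linarith, by linarith⟩] at hmem
    exact (T.le_max' _ hmem).not_gt hwu

lemma exists_add_intCast_le_disjoint_Ioc [Finite ι] [Nonempty ι] (x : ℝ) :
    ∃ q, ∃ k : ℤ, e q + k ≤ x ∧ Disjoint (Ioc (e q + k) x) (intCosets e) := by
  obtain ⟨q, hq⟩ := Finite.exists_max fun q => toIocMod one_pos (x - 1) (e q)
  obtain ⟨k, hk⟩ := exists_toIocMod_one_eq_add_intCast (x - 1) (e q)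
  have hmem := toIocMod_mem_Ioc one_pos (x - 1) (e q)
  rw [hk] at hmem hq
  refine ⟨q, k, by linarith [hmem.2], Set.disjoint_left.2 ?_⟩
  rintro u ⟨hzu, hux⟩ ⟨⟨q', k'⟩, rfl⟩
  have := hq q'
  rw [toIocMod_one_eq rfl ⟨by linarith [hmem.1], by linarith⟩] at this
  linarith

lemma le_add_one_of_disjoint_Ioc_intCosets [Nonempty ι] {x y : ℝ}
    (h : Disjoint (Ioc x y) (intCosets e)) : y ≤ x + 1 := by
  by_contra! hy
  have hmem := toIocMod_mem_Ioc one_pos x (e (Classical.arbitrary ι))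
  exact Set.disjoint_left.1 h ⟨hmem.1, hmem.2.trans hy.le⟩ (toIocMod_one_mem_intCosets _ _)

end IntCosets

namespace ConstOnGaps

variable {S T : Set ℝ} {g : ℝ → ℝ}

lemma mono (hg : ConstOnGaps S g) (hST : S ⊆ T) : ConstOnGaps T g :=
  fun _ _ hxy hdisj => hg hxy (hdisj.mono_right hST)

lemma comp_add_const (hg : ConstOnGaps S g) (c : ℝ) :
    ConstOnGaps ((· + c) ⁻¹' S) fun x => g (x + c) := by
  refine fun x y hxy hdisj => hg (by linarith) (Set.disjoint_left.2 fun u hu huS => ?_)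
  exact Set.disjoint_left.1 hdisj (show u - c ∈ Ioc x y from ⟨by linarith [hu.1], by
    linarith [hu.2]⟩) (show u - c ∈ (· + c) ⁻¹' S by simpa using huS)

lemma eventually_nhdsLT_eq {w z : ℝ} (hg : ConstOnGaps S g) (hwz : w < z)
    (hS : Disjoint (Ioo w z) S) : ∀ᶠ u in 𝓝[<] z, g u = g w := by
  filter_upwards [Ioo_mem_nhdsLT hwz] with u hu
  exact (hg hu.1.le (hS.mono_left (Ioc_subset_Ioo_right hu.2))).symm

lemma leftLim_eq {w z : ℝ} (hg : ConstOnGaps S g) (hwz : w < z) (hS : Disjoint (Ioo w z) S) :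
    Function.leftLim g z = g w :=
  leftLim_eq_of_tendsto <| tendsto_const_nhds.congr' <|
    (hg.eventually_nhdsLT_eq hwz hS).mono fun _ h => h.symm

lemma tendsto_leftLim {z : ℝ} (hg : ConstOnGaps S g) (hS : ∃ w < z, Disjoint (Ioo w z) S) :
    Tendsto g (𝓝[<] z) (𝓝 (Function.leftLim g z)) := by
  obtain ⟨w, hwz, hdisj⟩ := hS
  rw [hg.leftLim_eq hwz hdisj]
  exact tendsto_const_nhds.congr' <| (hg.eventually_nhdsLT_eq hwz hdisj).mono fun _ h => h.symm

lemma eventually_nhdsLT_eq_self {z : ℝ} (hg : ConstOnGaps S g)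
    (hS : ∃ w < z, Disjoint (Ioo w z) S) (hz : z ∉ S) : ∀ᶠ u in 𝓝[<] z, g u = g z := by
  obtain ⟨w, hwz, hdisj⟩ := hS
  have hdisj' : Disjoint (Ioc w z) S := by
    rw [← Ioo_insert_right hwz, disjoint_insert_left]
    exact ⟨hz, hdisj⟩
  filter_upwards [Ioo_mem_nhdsLT hwz] with u hu
  exact hg hu.2.le (hdisj'.mono_left (Ioc_subset_Ioc_left hu.1.le))

lemma sub_eq_sum_jumps {x : ℝ} (hg : ConstOnGaps S g) (P : Finset ℝ) :
    ∀ y, x ≤ y → S ∩ Ioc x y = P → g y - g x = ∑ z ∈ P, (g z - Function.leftLim g z) := by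
  classical
  induction P using Finset.induction_on_max with
  | empty =>
    intro y hxy hP
    rw [hg hxy (Set.disjoint_iff_inter_eq_empty.2 (by rw [inter_comm, hP, Finset.coe_empty]))]
    simp
  | insert a s has ih =>
    intro y hxy hP
    have haP : a ∈ S ∩ Ioc x y := by rw [hP]; simp
    -- `g` is constant on `[a, y]` and on `[w, a)`, with `w` beyond `x` and all of `s`
    set w := (insert x s).max' (Finset.insert_nonempty x s)
    have hxw : x ≤ w := Finset.le_max' _ x (Finset.mem_insert_self x s)
    have hsw : ∀ z ∈ s, z ≤ w := fun z hz => Finset.le_max' _ z (Finset.mem_insert_of_mem hz)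
    have hwa : w < a := (Finset.max'_lt_iff _ _).2 fun z hz =>
      (Finset.mem_insert.1 hz).elim (fun h => h ▸ haP.2.1) (has z)
    have hmem : ∀ z ∈ S, x < z → z ≤ y → z = a ∨ z ∈ s := fun z hzS hxz hzy => by
      have : z ∈ ((insert a s : Finset ℝ) : Set ℝ) := hP ▸ ⟨hzS, hxz, hzy⟩
      simpa using this
    have hSw : S ∩ Ioc x w = s := by
      ext z
      refine ⟨fun ⟨hzS, hxz, hzw⟩ => ?_, fun hz => ?_⟩
      · exact (hmem z hzS hxz (hzw.trans (hwa.le.trans haP.2.2))).resolve_left (by linarith)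
      · have : z ∈ S ∩ Ioc x y := by rw [hP]; simp [Finset.mem_coe.1 hz]
        exact ⟨this.1, this.2.1, hsw z hz⟩
    have hya : g a = g y := hg haP.2.2 <| Set.disjoint_left.2 fun z ⟨haz, hzy⟩ hzS =>
      (has z ((hmem z hzS (haP.2.1.trans haz) hzy).resolve_left haz.ne')).not_gt haz
    have hwa' : Function.leftLim g a = g w := hg.leftLim_eq hwa <|
      Set.disjoint_left.2 fun z ⟨hwz, hza⟩ hzS =>
        (hsw z ((hmem z hzS (hxw.trans_lt hwz) (hza.le.trans haP.2.2)).resolve_left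
          hza.ne)).not_gt hwz
    rw [Finset.sum_insert fun h => (has a h).false, ← ih w hxw hSw, hwa', ← hya]
    ring

end ConstOnGaps

lemma ConstOnGaps.measurable {ι : Type*} [Finite ι] [Nonempty ι] {e : ι → ℝ} {g : ℝ → ℝ}
    (hg : ConstOnGaps (intCosets e) g) : Measurable g := by
  intro A _
  -- `C z` is the interval from `z` to the next point of `intCosets e`, on which `g = g z`
  set C : ℝ → Set ℝ := fun z => {x | z ≤ x ∧ Disjoint (Ioc z x) (intCosets e)}
  have hA : g ⁻¹' A = ⋃ z ∈ intCosets e ∩ g ⁻¹' A, C z := by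
    ext x
    simp only [C, mem_preimage, mem_iUnion, mem_ofPred_eq, mem_inter_iff, exists_prop]
    constructor
    · intro hx
      obtain ⟨q, k, hzx, hdisj⟩ := exists_add_intCast_le_disjoint_Ioc (e := e) x
      exact ⟨_, ⟨add_intCast_mem_intCosets q k, by rwa [hg hzx hdisj]⟩, hzx, hdisj⟩
    · rintro ⟨z, ⟨-, hz⟩, hzx, hdisj⟩
      rwa [← hg hzx hdisj]
  rw [hA]
  refine MeasurableSet.biUnion ((countable_range _).mono inter_subset_left) fun z _ => ?_
  exact Set.OrdConnected.measurableSet ⟨fun x hx y hy u hu =>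
    ⟨hx.1.trans hu.1, hy.2.mono_left (Ioc_subset_Ioc_right hu.2)⟩⟩

section Arcs

variable {N : ℕ} [NeZero N] {d : Fin N → ℝ}

lemma exists_arc_eq_Ico (hd : StrictMono d) (hdmem : ∀ i, d i ∈ Ico (0 : ℝ) 1) (i : Fin N) :
    ∃ E ∈ intCosets d, d i < E ∧ arc d i = Ico (d i) E := by
  unfold arc
  split_ifs with h
  · refine ⟨d (i + 1) + (1 : ℤ), add_intCast_mem_intCosets _ _, ?_, by simp⟩
    linarith [(hdmem i).2, (hdmem (i + 1)).1, show ((1 : ℤ) : ℝ) = 1 from Int.cast_one]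
  · refine ⟨d (i + 1) + (0 : ℤ), add_intCast_mem_intCosets _ _, ?_, by simp⟩
    rw [Int.cast_zero, add_zero]
    apply hd
    rw [Fin.lt_def, Fin.val_add, Fin.val_one', Nat.add_mod_mod, Nat.mod_eq_of_lt (by omega)]
    omega

lemma constOnGaps_of_forall_arc (hd : StrictMono d) (hdmem : ∀ i, d i ∈ Ico (0 : ℝ) 1)
    {g : ℝ → ℝ} (hper : Function.Periodic g 1)
    (hconst : ∀ i : Fin N, ∀ x ∈ arc d i, ∀ y ∈ arc d i, g x = g y) :
    ConstOnGaps (intCosets d) g := by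
  -- `[x, y]` lies in the translate by `k` of the arc starting at `d j + k`, the last point of
  -- `intCosets d` before `x`
  intro x y hxy hdisj
  obtain ⟨j, k, hzx, hzfree⟩ := exists_add_intCast_le_disjoint_Ioc (e := d) x
  have hzy : Disjoint (Ioc (d j + k) y) (intCosets d) := by
    rw [← Ioc_union_Ioc_eq_Ioc hzx hxy]
    exact hzfree.union_left hdisj
  obtain ⟨E, ⟨⟨j', k'⟩, hE⟩, hjE, harc⟩ := exists_arc_eq_Ico hd hdmem j
  have hyE : y - k < E := by
    by_contra! h
    refine Set.disjoint_left.1 hzy (show E + k ∈ Ioc (d j + k) y from ⟨by linarith, by linarith⟩)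
      ⟨(j', k' + k), by simp [← hE, add_assoc]⟩
  have hper' : ∀ u, g (u - k) = g u := fun u => by simpa using hper.sub_int_mul_eq k (x := u)
  rw [← hper' x, ← hper' y]
  exact hconst j _ (harc ▸ ⟨by linarith, by linarith⟩) _ (harc ▸ ⟨by linarith, hyE⟩)

end Arcs

lemma Function.Periodic.exists_eq_apply_of_constOnGaps {ι : Type*} [Finite ι] [Nonempty ι]
    {e : ι → ℝ} {g : ℝ → ℝ} (hper : Function.Periodic g 1) (hg : ConstOnGaps (intCosets e) g)
    (x : ℝ) : ∃ q, g x = g (e q) := by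
  obtain ⟨q, k, hzx, hfree⟩ := exists_add_intCast_le_disjoint_Ioc (e := e) x
  exact ⟨q, by rw [← hg hzx hfree]; simpa using hper.int_mul k (e q)⟩

lemma Function.Periodic.exists_forall_abs_le_of_constOnGaps {ι : Type*} [Finite ι] [Nonempty ι]
    {e : ι → ℝ} {g : ℝ → ℝ} (hper : Function.Periodic g 1) (hg : ConstOnGaps (intCosets e) g) :
    ∃ q, ∀ x, |g x| ≤ |g (e q)| := by
  obtain ⟨q, hq⟩ := Finite.exists_max fun q => |g (e q)|
  refine ⟨q, fun x => ?_⟩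
  obtain ⟨q', hq'⟩ := hper.exists_eq_apply_of_constOnGaps hg x
  exact hq' ▸ hq q'

lemma Function.Periodic.exists_finset_forall_mem_of_constOnGaps {ι : Type*} [Fintype ι]
    [Nonempty ι] {e : ι → ℝ} {g : ℝ → ℝ} (hper : Function.Periodic g 1)
    (hg : ConstOnGaps (intCosets e) g) :
    ∃ s : Finset ℝ, s.card ≤ Fintype.card ι ∧ ∀ x, g x ∈ s := by
  classical
  refine ⟨Finset.univ.image (g ∘ e), Finset.card_image_le, fun x => ?_⟩
  obtain ⟨q, hq⟩ := hper.exists_eq_apply_of_constOnGaps hg x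
  exact Finset.mem_image.2 ⟨q, Finset.mem_univ _, hq.symm⟩

noncomputable def partialSum (α : ℝ) (b r : ℝ → ℝ) (m : ℕ) (x : ℝ) : ℝ :=
  ∑ n ∈ Finset.range m, (∏ k ∈ Finset.range n, r (x + k * α)) * b (x + n * α)

section Series

variable {α : ℝ} {b r : ℝ → ℝ}

lemma partialSum_zero : partialSum α b r 0 = 0 := by
  ext x
  simp [partialSum]

lemma partialSum_succ (m : ℕ) (x : ℝ) :
    partialSum α b r (m + 1) x = b x + r x * partialSum α b r m (x + α) := by
  simp only [partialSum, Finset.sum_range_succ', Finset.prod_range_succ', Finset.mul_sum]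
  simp only [Nat.cast_zero, zero_mul, add_zero, Finset.prod_range_zero, one_mul, Nat.cast_succ]
  rw [add_comm]
  congr 1
  refine Finset.sum_congr rfl fun n _ => ?_
  simp only [add_mul, one_mul, ← add_assoc, add_right_comm x α]
  ring

lemma Xser_periodic (hb : Function.Periodic b 1) (hr : Function.Periodic r 1) :
    Function.Periodic (Xser α b r) 1 := fun x => by
  simp only [Xser, add_right_comm x 1, hb _, hr _]

lemma partialSum_constOnGaps {ι : Type*} {e : ι → ℝ} (hb : ConstOnGaps (intCosets e) b)
    (hr : ConstOnGaps (intCosets e) r) (m : ℕ) :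
    ConstOnGaps (intCosets fun q : ι × Fin m => e q.1 - (q.2 : ℕ) * α) (partialSum α b r m) := by
  have hshift : ∀ {g : ℝ → ℝ}, ConstOnGaps (intCosets e) g → ∀ n < m,
      ConstOnGaps (intCosets fun q : ι × Fin m => e q.1 - (q.2 : ℕ) * α)
        fun x => g (x + n * α) := fun hg n hn =>
    (hg.comp_add_const _).mono fun u ⟨⟨q, k⟩, hu⟩ =>
      ⟨((q, ⟨n, hn⟩), k), by simp only at hu ⊢; linarith⟩
  intro x y hxy hdisj
  refine Finset.sum_congr rfl fun n hn => ?_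
  have hn := Finset.mem_range.1 hn
  have hrk : ∀ k ∈ Finset.range n, r (x + k * α) = r (y + k * α) := fun k hk =>
    hshift hr k ((Finset.mem_range.1 hk).trans hn) hxy hdisj
  rw [show b (x + n * α) = b (y + n * α) from hshift hb n hn hxy hdisj, Finset.prod_congr rfl hrk]

variable {ρ B : ℝ} (hρ : ρ < 1) (hrρ : ∀ x, |r x| ≤ ρ) (hbB : ∀ x, |b x| ≤ B)
include hrρ hbB

lemma abs_Xser_term_le (n : ℕ) (x : ℝ) :
    |(∏ k ∈ Finset.range n, r (x + k * α)) * b (x + n * α)| ≤ B * ρ ^ n := by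
  rw [abs_mul, Finset.abs_prod, mul_comm]
  refine mul_le_mul (hbB _) ?_ (by positivity) ((abs_nonneg _).trans (hbB 0))
  simpa using Finset.prod_le_prod (s := Finset.range n) (fun k _ => abs_nonneg _)
    fun k _ => hrρ (x + k * α)

include hρ

lemma tendsto_partialSum (x : ℝ) :
    Tendsto (fun m => partialSum α b r m x) atTop (𝓝 (Xser α b r x)) := by
  have hρ0 : 0 ≤ ρ := (abs_nonneg _).trans (hrρ 0)
  refine (Summable.hasSum ?_).tendsto_sum_nat
  exact .of_norm_bounded ((summable_geometric_of_lt_one hρ0 hρ).mul_left B) fun n => by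
    simpa only [Real.norm_eq_abs] using abs_Xser_term_le (α := α) hrρ hbB n x

lemma abs_Xser_sub_partialSum_le (m : ℕ) (x : ℝ) :
    |Xser α b r x - partialSum α b r m x| ≤ B * ρ ^ m / (1 - ρ) := by
  rw [abs_sub_comm, ← Real.dist_eq]
  refine dist_le_of_le_geometric_of_tendsto ρ B hρ (fun n => ?_)
    (tendsto_partialSum hρ hrρ hbB x) m
  rw [Real.dist_eq, abs_sub_comm, partialSum, partialSum, Finset.sum_range_succ,
    add_sub_cancel_left]
  exact abs_Xser_term_le hrρ hbB n x

end Series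

lemma abs_sub_le_two_mul_of_tendsto {β : Type*} {l : Filter β} [l.NeBot] {f g : β → ℝ} {a : β}
    {L ε : ℝ} (hfg : ∀ u, |f u - g u| ≤ ε) (hf : Tendsto f l (𝓝 (f a)))
    (hg : Tendsto g l (𝓝 L)) : |g a - L| ≤ 2 * ε := by
  have h : Tendsto (fun u => |g a - (g u - f u + f a)|) l (𝓝 |g a - L|) := by
    simpa using (((hg.sub hf).add_const (f a)).const_sub (g a)).abs
  refine le_of_tendsto' h fun u => ?_
  calc |g a - (g u - f u + f a)| = |(f u - g u) - (f a - g a)| := by ring_nf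
    _ ≤ |f u - g u| + |f a - g a| := abs_sub _ _
    _ ≤ 2 * ε := by linarith [hfg u, hfg a]

def FirstEntryIn (α : ℝ) (A B : Set ℝ) (z : ℝ) : Prop :=
  ∀ l : ℕ, z + l * α ∈ A → (∀ l' < l, z + l' * α ∉ A) → z + l * α ∈ B

namespace FirstEntryIn

variable {α z : ℝ} {A B : Set ℝ}

lemma mem_of_mem (h : FirstEntryIn α A B z) (hz : z ∈ A) : z ∈ B := by
  simpa using h 0 (by simpa using hz) (by simp)

lemma add (h : FirstEntryIn α A B z) (hz : z ∉ A) : FirstEntryIn α A B (z + α) := by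
  have e : ∀ l : ℕ, z + α + l * α = z + ((l + 1 : ℕ) : ℝ) * α := fun l => by push_cast; ring
  intro l hl hmin
  rw [e] at hl ⊢
  refine h (l + 1) hl fun l' hl' => ?_
  cases l' with
  | zero => simpa using hz
  | succ l' => rw [← e]; exact hmin l' (by omega)

end FirstEntryIn

section Jumps

variable {α : ℝ} {b r : ℝ → ℝ}

lemma tendsto_partialSum_succ_nhdsLT {m : ℕ} {z L : ℝ} (hb : ∀ᶠ u in 𝓝[<] z, b u = b z)
    (hr : ∀ᶠ u in 𝓝[<] z, r u = r z) (hS : Tendsto (partialSum α b r m) (𝓝[<] (z + α)) (𝓝 L)) :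
    Tendsto (partialSum α b r (m + 1)) (𝓝[<] z) (𝓝 (b z + r z * L)) := by
  have hshift : Tendsto (· + α) (𝓝[<] z) (𝓝[<] (z + α)) := Filter.map_add_right_nhdsLT.le
  refine (tendsto_const_nhds.add (tendsto_const_nhds.mul (hS.comp hshift))).congr' ?_
  filter_upwards [hb, hr] with u hbu hru
  rw [partialSum_succ, hbu, hru]
  rfl

variable {ι : Type*} [Finite ι] {e : ι → ℝ} {Bot : Set ℝ} {C ρ : ℝ}

/-- The jump at `z` is `r z` times the jump at `z + α` as long as the orbit stays off
`intCosets e`; where it enters, `Xser` is left-continuous, so the jump there is at most twice the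
uniform error. -/
lemma abs_partialSum_sub_leftLim_le (hb : ConstOnGaps (intCosets e) b)
    (hr : ConstOnGaps (intCosets e) r) (hrρ : ∀ x, |r x| ≤ ρ) (hC : 0 ≤ C)
    (htail : ∀ m x, |Xser α b r x - partialSum α b r m x| ≤ C * ρ ^ m)
    (hcont : ∀ z ∈ Bot, Tendsto (Xser α b r) (𝓝[<] z) (𝓝 (Xser α b r z))) (m : ℕ) :
    ∀ z, FirstEntryIn α (intCosets e) Bot z →
      |partialSum α b r m z - Function.leftLim (partialSum α b r m) z| ≤ 2 * (C * ρ ^ m) := by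
  have hρ : 0 ≤ ρ := (abs_nonneg _).trans (hrρ 0)
  induction m with
  | zero =>
    intro z _
    have h0 : Function.leftLim (0 : ℝ → ℝ) z = 0 := leftLim_eq_of_tendsto tendsto_const_nhds
    simpa [partialSum_zero, h0] using hC
  | succ m ih =>
    intro z hz
    by_cases hzA : z ∈ intCosets e
    · exact abs_sub_le_two_mul_of_tendsto (htail (m + 1)) (hcont z (hz.mem_of_mem hzA))
        ((partialSum_constOnGaps hb hr _).tendsto_leftLim (exists_disjoint_Ioo_intCosets z))
    · have hlim := tendsto_partialSum_succ_nhdsLT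
        (hb.eventually_nhdsLT_eq_self (exists_disjoint_Ioo_intCosets z) hzA)
        (hr.eventually_nhdsLT_eq_self (exists_disjoint_Ioo_intCosets z) hzA)
        ((partialSum_constOnGaps (α := α) hb hr m).tendsto_leftLim
          (exists_disjoint_Ioo_intCosets (z + α)))
      rw [leftLim_eq_of_tendsto hlim, partialSum_succ]
      calc |b z + r z * partialSum α b r m (z + α) -
            (b z + r z * Function.leftLim (partialSum α b r m) (z + α))|
          = |r z| * |partialSum α b r m (z + α) -
              Function.leftLim (partialSum α b r m) (z + α)| := by
            rw [← abs_mul]; ring_nf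
        _ ≤ ρ * (2 * (C * ρ ^ m)) :=
            mul_le_mul (hrρ z) (ih _ (hz.add hzA)) (abs_nonneg _) hρ
        _ = 2 * (C * ρ ^ (m + 1)) := by ring

lemma abs_partialSum_sub_le_of_disjoint_Ioc {G : Set ℝ} (hb : ConstOnGaps (intCosets e) b)
    (hr : ConstOnGaps (intCosets e) r) (hrρ : ∀ x, |r x| ≤ ρ) (hC : 0 ≤ C)
    (htail : ∀ m x, |Xser α b r x - partialSum α b r m x| ≤ C * ρ ^ m)
    (hcont : ∀ z ∈ Bot, Tendsto (Xser α b r) (𝓝[<] z) (𝓝 (Xser α b r z)))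
    (hentry : ∀ z ∉ G, FirstEntryIn α (intCosets e) Bot z) (m : ℕ) {x y : ℝ} (hxy : x ≤ y)
    (hy : y ≤ x + 1) (hfree : Disjoint (Ioc x y) G) :
    |partialSum α b r m y - partialSum α b r m x| ≤ Nat.card ι * m * (2 * (C * ρ ^ m)) := by
  set S := partialSum α b r m
  obtain ⟨P, hcard, hP⟩ :=
    exists_finset_eq_intCosets_inter_Ioc (e := fun q : ι × Fin m => e q.1 - (q.2 : ℕ) * α) hy
  have hjump : ∀ z ∈ P, |S z - Function.leftLim S z| ≤ 2 * (C * ρ ^ m) := fun z hz =>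
    abs_partialSum_sub_leftLim_le hb hr hrρ hC htail hcont m z <| hentry z fun hzG =>
      have hzP : z ∈ intCosets _ ∩ Ioc x y := hP ▸ Finset.mem_coe.2 hz
      Set.disjoint_left.1 hfree hzP.2 hzG
  rw [(partialSum_constOnGaps hb hr m).sub_eq_sum_jumps P y hxy hP]
  refine (Finset.abs_sum_le_sum_abs _ _).trans ((Finset.sum_le_card_nsmul _ _ _ hjump).trans ?_)
  have hρ : 0 ≤ ρ := (abs_nonneg _).trans (hrρ 0)
  rw [nsmul_eq_mul]
  refine mul_le_mul_of_nonneg_right ?_ (by positivity)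
  exact_mod_cast hcard.trans (by simp)

end Jumps

lemma Xser_eq_of_disjoint_Ioc {α : ℝ} {b r : ℝ → ℝ} {ι : Type*} [Finite ι] {e : ι → ℝ}
    {Bot G : Set ℝ} {ρ B : ℝ} (hb : ConstOnGaps (intCosets e) b)
    (hr : ConstOnGaps (intCosets e) r) (hρ : ρ < 1) (hrρ : ∀ x, |r x| ≤ ρ)
    (hbB : ∀ x, |b x| ≤ B) (hentry : ∀ z ∉ G, FirstEntryIn α (intCosets e) Bot z)
    (hcont : ∀ z ∈ Bot, Tendsto (Xser α b r) (𝓝[<] z) (𝓝 (Xser α b r z)))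
    {x y : ℝ} (hxy : x ≤ y) (hy : y ≤ x + 1) (hfree : Disjoint (Ioc x y) G) :
    Xser α b r x = Xser α b r y := by
  set X := Xser α b r
  set C := B / (1 - ρ)
  have hρ0 : 0 ≤ ρ := (abs_nonneg _).trans (hrρ 0)
  have hC : 0 ≤ C := div_nonneg ((abs_nonneg _).trans (hbB 0)) (by linarith)
  have htail : ∀ m u, |X u - partialSum α b r m u| ≤ C * ρ ^ m := fun m u => by
    simpa only [C, div_mul_eq_mul_div] using abs_Xser_sub_partialSum_le hρ hrρ hbB m u
  have hbound : ∀ m : ℕ, |X y - X x| ≤ 2 * C * ρ ^ m + 2 * C * Nat.card ι * (m * ρ ^ m) := by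
    intro m
    set S := partialSum α b r m
    calc |X y - X x| ≤ |X y - S y| + |S y - S x| + |S x - X x| := by
          linarith [abs_sub_le (X y) (S y) (X x), abs_sub_le (S y) (S x) (X x)]
      _ ≤ C * ρ ^ m + Nat.card ι * m * (2 * (C * ρ ^ m)) + C * ρ ^ m := by
        gcongr
        · exact htail m y
        · exact abs_partialSum_sub_le_of_disjoint_Ioc hb hr hrρ hC htail hcont hentry m hxy hy
            hfree
        · rw [abs_sub_comm]; exact htail m x
      _ = _ := by ring
  have hlim : Tendsto (fun m : ℕ => 2 * C * ρ ^ m + 2 * C * Nat.card ι * (m * ρ ^ m))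
      atTop (𝓝 0) := by
    simpa using ((tendsto_pow_atTop_nhds_zero_of_lt_one hρ0 hρ).const_mul (2 * C)).add
      ((tendsto_self_mul_const_pow_of_lt_one hρ0 hρ).const_mul (2 * C * Nat.card ι))
  have := ge_of_tendsto' hlim hbound
  rw [abs_nonpos_iff, sub_eq_zero] at this
  exact this.symm

lemma Function.Periodic.tendsto_nhdsLT_add_intCast {f : ℝ → ℝ} (hf : Function.Periodic f 1)
    {z : ℝ} (h : Tendsto f (𝓝[<] z) (𝓝 (f z))) (k : ℤ) :
    Tendsto f (𝓝[<] (z + k)) (𝓝 (f (z + k))) := by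
  have hk : ∀ u, f (u + k) = f u := fun u => by simpa using hf.int_mul k u
  rw [← Filter.map_add_right_nhdsLT, tendsto_map'_iff, hk]
  exact h.congr fun u => (hk u).symm

lemma Irrational.eq_of_add_intCast_eq {α : ℝ} (hirr : Irrational α) {p q : ℕ} {m n : ℤ}
    (h : p * α + m = q * α + n) : p = q := by
  by_contra hpq
  have hne : ((p : ℤ) - q) ≠ 0 := sub_ne_zero.2 (by exact_mod_cast hpq)
  refine (hirr.intCast_mul hne).ne_int (n - m) ?_
  push_cast
  linarith

/-- The lift to `ℝ` of `{T^p β_k : p ≤ pk k}`. -/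
def orbitGrid {κ : Type*} (α : ℝ) (β : κ → ℝ) (pk : κ → ℕ) : Set ℝ :=
  intCosets fun q : (Σ k, Fin (pk k + 1)) => β q.1 + (q.2 : ℕ) * α

section Chains

variable {κ : Type*} {α : ℝ} {β : κ → ℝ} {pk : κ → ℕ}

lemma mem_orbitGrid_iff {z : ℝ} :
    z ∈ orbitGrid α β pk ↔ ∃ k, ∃ p : ℕ, p ≤ pk k ∧ ∃ m : ℤ, z = β k + p * α + m := by
  constructor
  · rintro ⟨⟨⟨k, p⟩, m⟩, rfl⟩
    exact ⟨k, p, Nat.lt_succ_iff.1 p.2, m, rfl⟩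
  · rintro ⟨k, p, hp, m, rfl⟩
    exact ⟨(⟨k, ⟨p, Nat.lt_succ_of_le hp⟩⟩, m), rfl⟩

/-- Entering `intCosets d` at `β k + pα + ℤ` with `0 < p ≤ l` would mean an earlier visit to
`β k + ℤ ⊆ intCosets d`, and `p > l` would put the starting point on the grid. -/
lemma firstEntryIn_of_not_mem_orbitGrid {ι : Type*} {d : ι → ℝ} (hβ : ∀ k, β k ∈ intCosets d)
    (hoff : ∀ j, ∃ k, ∃ p ≤ pk k, ∃ M : ℤ, d j = β k + p * α + M) {z : ℝ}
    (hz : z ∉ orbitGrid α β pk) : FirstEntryIn α (intCosets d) (intCosets β) z := by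
  rintro l ⟨⟨j, M₁⟩, hj⟩ hmin
  obtain ⟨k, p, hp, M, hM⟩ := hoff j
  simp only at hj
  rcases le_or_gt p l with hpl | hlp
  · obtain ⟨⟨j', M'⟩, hj'⟩ := hβ k
    simp only at hj'
    obtain rfl : p = 0 := by
      by_contra hp0
      refine hmin (l - p) (by omega) ⟨(j', M' + M + M₁), ?_⟩
      simp only [Nat.cast_sub hpl]
      push_cast
      linarith
    exact ⟨(k, M + M₁), by push_cast at hM ⊢; linarith⟩
  · exact absurd (mem_orbitGrid_iff.2 ⟨k, p - l, by omega, M + M₁, by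
      rw [Nat.cast_sub hlp.le]; push_cast; linarith⟩) hz

end Chains

lemma exists_chain_offset {ι : Type*} {d : ι → ℝ} {α : ℝ} (hirr : Irrational α) {K : ℕ}
    {mk : Fin K → ℕ} {c : (k : Fin K) → Fin (mk k + 1) → ι} {pk : Fin K → ℕ}
    (hpart : ∀ j : ι, ∃! q : (Σ k : Fin K, Fin (mk k + 1)), c q.1 q.2 = j)
    (hchain : ∀ k : Fin K, ∀ i i' : Fin (mk k + 1),
      i ≤ i' ↔ ∃ p : ℕ, ∃ m : ℤ, d (c k i') = d (c k i) + p * α + m)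
    (hpk : ∀ k : Fin K, ∃ m : ℤ, d (c k (Fin.last (mk k))) = d (c k 0) + (pk k) * α + m)
    (j : ι) : ∃ k, ∃ p ≤ pk k, ∃ M : ℤ, d j = d (c k 0) + p * α + M := by
  obtain ⟨⟨k, i⟩, rfl, -⟩ := hpart j
  obtain ⟨p, M, hM⟩ := (hchain k 0 i).1 (Fin.zero_le i)
  obtain ⟨p', M', hM'⟩ := (hchain k i (Fin.last _)).1 (Fin.le_last i)
  obtain ⟨M'', hM''⟩ := hpk k
  have hsum : pk k = p + p' :=
    hirr.eq_of_add_intCast_eq (m := M'') (n := M + M') (by push_cast; linarith)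
  exact ⟨k, p, by omega, M, hM⟩

theorem continuity_implies_finitely_supported_law_general
    (α : ℝ) (hirr : Irrational α)
    (N : ℕ) [NeZero N] (d : Fin N → ℝ)
    (hd : StrictMono d) (hdmem : ∀ i, d i ∈ Set.Ico (0 : ℝ) 1)
    (b r : ℝ → ℝ) (hbper : Function.Periodic b 1) (hrper : Function.Periodic r 1)
    (hr : ∀ x, r x ∈ Set.Ioo (0 : ℝ) 1)
    (hbconst : ∀ i : Fin N, ∀ x ∈ arc d i, ∀ y ∈ arc d i, b x = b y)
    (hrconst : ∀ i : Fin N, ∀ x ∈ arc d i, ∀ y ∈ arc d i, r x = r y)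
    -- the decomposition of `{d_0,…,d_{N−1}}` into maximal chains
    (K : ℕ) (hK : 0 < K) (mk : Fin K → ℕ)
    (c : (k : Fin K) → Fin (mk k + 1) → Fin N) (pk : Fin K → ℕ)
    (hpart : ∀ j : Fin N, ∃! q : (Σ k : Fin K, Fin (mk k + 1)), c q.1 q.2 = j)
    (hchain : ∀ k : Fin K, ∀ i i' : Fin (mk k + 1),
      i ≤ i' ↔ ∃ p : ℕ, ∃ m : ℤ, d (c k i') = d (c k i) + p * α + m)
    (hpk : ∀ k : Fin K, ∃ m : ℤ,
      d (c k (Fin.last (mk k))) = d (c k 0) + (pk k) * α + m)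
    -- `X` is continuous at every `d_{0,k}`
    (hcont : ∀ k : Fin K,
      Tendsto (Xser α b r) (𝓝[<] (d (c k 0))) (𝓝 (Xser α b r (d (c k 0))))) :
    -- `X` is constant on each interval of the partition determined by the `T^p d_{0,k}`
    (∀ x y : ℝ, x ≤ y →
      (∀ z : ℝ, x < z → z ≤ y →
        ¬ ∃ k : Fin K, ∃ p : ℕ, p ≤ pk k ∧ ∃ m : ℤ, z = d (c k 0) + p * α + m) →
      Xser α b r x = Xser α b r y)
    -- `P_X` is purely atomic with at most `∑_k (1 + p_k)` atoms
    ∧ ∃ s : Finset ℝ, s.card ≤ ∑ k : Fin K, (1 + pk k) ∧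
        Measure.map (Xser α b r) (volume.restrict (Set.Ico (0 : ℝ) 1)) ↑s = 1 := by
  have : Nonempty (Σ k : Fin K, Fin (pk k + 1)) := ⟨⟨⟨0, hK⟩, 0⟩⟩
  set X := Xser α b r
  have hbgap := constOnGaps_of_forall_arc hd hdmem hbper hbconst
  have hrgap := constOnGaps_of_forall_arc hd hdmem hrper hrconst
  obtain ⟨i₀, hrρ⟩ := hrper.exists_forall_abs_le_of_constOnGaps hrgap
  obtain ⟨i₁, hbB⟩ := hbper.exists_forall_abs_le_of_constOnGaps hbgap
  have hentry : ∀ z ∉ orbitGrid α (fun k => d (c k 0)) pk,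
      FirstEntryIn α (intCosets d) (intCosets fun k => d (c k 0)) z :=
    fun z => firstEntryIn_of_not_mem_orbitGrid (fun k => ⟨(c k 0, 0), by simp⟩)
      (exists_chain_offset hirr hpart hchain hpk)
  have hcontBot : ∀ z ∈ intCosets fun k => d (c k 0), Tendsto X (𝓝[<] z) (𝓝 (X z)) := by
    rintro _ ⟨⟨k, M⟩, rfl⟩
    exact (Xser_periodic hbper hrper).tendsto_nhdsLT_add_intCast (hcont k) M
  have hX : ConstOnGaps (orbitGrid α (fun k => d (c k 0)) pk) X := fun x y hxy hfree =>
    Xser_eq_of_disjoint_Ioc hbgap hrgap ((abs_of_pos (hr _).1).trans_lt (hr _).2) hrρ hbB hentry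
      hcontBot hxy (le_add_one_of_disjoint_Ioc_intCosets hfree) hfree
  refine ⟨fun x y hxy hfree => hX hxy (Set.disjoint_left.2 fun z hz hzG =>
    hfree z hz.1 hz.2 (mem_orbitGrid_iff.1 hzG)), ?_⟩
  obtain ⟨s, hs, hall⟩ := (Xser_periodic hbper hrper).exists_finset_forall_mem_of_constOnGaps hX
  refine ⟨s, hs.trans (by simp [add_comm]), ?_⟩
  rw [Measure.map_apply hX.measurable s.measurableSet,
    show X ⁻¹' s = univ from eq_univ_of_forall hall, Measure.restrict_apply_univ, Real.volume_Ico]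
  simp

/-- If `X` is continuous at the bottom point `d_{0,k}` of every maximal chain, then `X` is
constant on each interval of the partition of the circle determined by the points
`T^p d_{0,k}`, `0 ≤ p ≤ p_k`; consequently `P_X` is purely atomic, supported by a finite set
with at most `∑_k (1 + p_k)` elements. -/
theorem continuity_implies_finitely_supported_law
    (α : ℝ) (hα : α ∈ Set.Ioo (0 : ℝ) 1) (hirr : Irrational α)
    (N : ℕ) [NeZero N] (d : Fin N → ℝ)
    (hd : StrictMono d) (hdmem : ∀ i, d i ∈ Set.Ico (0 : ℝ) 1)
    (b r : ℝ → ℝ) (hbper : Function.Periodic b 1) (hrper : Function.Periodic r 1)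
    (hr : ∀ x, r x ∈ Set.Ioo (0 : ℝ) 1)
    (hbconst : ∀ i : Fin N, ∀ x ∈ arc d i, ∀ y ∈ arc d i, b x = b y)
    (hrconst : ∀ i : Fin N, ∀ x ∈ arc d i, ∀ y ∈ arc d i, r x = r y)
    -- the decomposition of `{d_0,…,d_{N−1}}` into maximal chains
    (K : ℕ) (hK : 0 < K) (mk : Fin K → ℕ)
    (c : (k : Fin K) → Fin (mk k + 1) → Fin N) (pk : Fin K → ℕ)
    (hpart : ∀ j : Fin N, ∃! q : (Σ k : Fin K, Fin (mk k + 1)), c q.1 q.2 = j)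
    (hchain : ∀ k : Fin K, ∀ i i' : Fin (mk k + 1),
      i ≤ i' ↔ ∃ p : ℕ, ∃ m : ℤ, d (c k i') = d (c k i) + p * α + m)
    (hmax : ∀ k k' : Fin K, ∀ i : Fin (mk k + 1), ∀ i' : Fin (mk k' + 1),
      (∃ p : ℕ, ∃ m : ℤ, d (c k' i') = d (c k i) + p * α + m) → k = k')
    (hpk : ∀ k : Fin K, ∃ m : ℤ,
      d (c k (Fin.last (mk k))) = d (c k 0) + (pk k) * α + m)
    -- `X` is continuous at every `d_{0,k}`
    (hcont : ∀ k : Fin K,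
      Tendsto (Xser α b r) (𝓝[<] (d (c k 0))) (𝓝 (Xser α b r (d (c k 0))))) :
    -- `X` is constant on each interval of the partition determined by the `T^p d_{0,k}`
    (∀ x y : ℝ, x ≤ y →
      (∀ z : ℝ, x < z → z ≤ y →
        ¬ ∃ k : Fin K, ∃ p : ℕ, p ≤ pk k ∧ ∃ m : ℤ, z = d (c k 0) + p * α + m) →
      Xser α b r x = Xser α b r y)
    -- `P_X` is purely atomic with at most `∑_k (1 + p_k)` atoms
    ∧ ∃ s : Finset ℝ, s.card ≤ ∑ k : Fin K, (1 + pk k) ∧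
        Measure.map (Xser α b r) (volume.restrict (Set.Ico (0 : ℝ) 1)) ↑s = 1 :=
  continuity_implies_finitely_supported_law_general α hirr N d hd hdmem b r hbper hrper hr hbconst
    hrconst K hK mk c pk hpart hchain hpk hcont
end

section
/- Suppose r(x)=λ∈(0,1) is constant and the points d₀,…,d_{N−1} lie in pairwise distinct T-orbits (no d_j is of the form T^p d_i with p≥0 and i≠j, nor T^p d_i with p≥1 and i=j). Then P_X is purely atomic if and only if b is constant on 𝕋, in which case P_X=δ_{b/(1−λ)}. -/
/-!
If `b` is not constant, an atom of `P_X` has a level set of positive measure, so by Steinhaus'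
theorem `X (x + t) = X x` for some `x` and arbitrarily small `t > 0`. Then
`∑ λⁿ (b (x + nα + t) - b (x + nα)) = 0`, and the `n`-th term is nonzero only if a
discontinuity `d_j + m` lies in `(x + nα, x + nα + t]`. Such `n` exist because the forward orbit
of an irrational rotation is dense. Because the `d_j` lie in distinct orbits, once `t` is small
the first such `n` is followed by a gap of any prescribed length `P`, and the first nonzero term
then outweighs the geometric tail, a contradiction.
-/

open MeasureTheory Filter Topology

open Set
open scoped Pointwise

theorem Fin.apply_eq_apply_zero_of_forall_add_one {ι : Type*} {N : ℕ} [NeZero N]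
    {f : Fin N → ι} (h : ∀ i, f (i + 1) = f i) (i : Fin N) : f i = f 0 := by
  obtain ⟨n, rfl⟩ := Nat.exists_eq_succ_of_ne_zero (NeZero.ne N)
  induction i using Fin.induction with
  | zero => rfl
  | succ i ih => rw [← Fin.coeSucc_eq_succ, h, ih]

theorem Irrational.exists_nat_mul_add_int_mem_Ioo {α : ℝ} (hα : Irrational α) {a b : ℝ}
    (hab : a < b) : ∃ (n : ℕ) (m : ℤ), n * α + m ∈ Ioo a b := by
  have hdense : DenseRange fun n : ℕ => n • (α : AddCircle (1 : ℝ)) :=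
    denseRange_zsmul_iff_nsmul.1 (AddCircle.denseRange_zsmul_coe_iff.2 (by simpa using hα))
  obtain ⟨n, y, hy, hny⟩ := hdense.exists_mem_open
    (QuotientAddGroup.isOpenMap_coe _ isOpen_Ioo) ((nonempty_Ioo.2 hab).image _)
  obtain ⟨m, hm⟩ := (AddCircle.coe_eq_zero_iff (p := (1 : ℝ))).1
    (show ((y - n * α : ℝ) : AddCircle (1 : ℝ)) = 0 by
      rw [AddCircle.coe_sub, hny, ← AddCircle.coe_nsmul, nsmul_eq_mul, sub_self])
  refine ⟨n, m, ?_⟩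
  rw [zsmul_one] at hm
  rwa [hm, add_sub_cancel]

theorem Set.Finite.exists_pos_le_abs {s : Set ℝ} (hs : s.Finite) :
    ∃ δ > 0, ∀ v ∈ s, v ≠ 0 → δ ≤ |v| := by
  have hev : ∀ᶠ δ in 𝓝 (0 : ℝ), ∀ v ∈ s, v ≠ 0 → δ ≤ |v| := by
    refine (eventually_all_finite hs).2 fun v _ => ?_
    by_cases hv : v = 0
    · exact .of_forall fun _ h => (h hv).elim
    · exact (eventually_le_nhds (abs_pos.2 hv)).mono fun _ h _ => h
  obtain ⟨δ, hδ, hδ0⟩ :=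
    ((hev.filter_mono nhdsWithin_le_nhds).and (self_mem_nhdsWithin (s := Ioi 0))).exists
  exact ⟨δ, hδ0, hδ⟩

theorem MeasureTheory.Measure.exists_measurableSet_subset_preimage_singleton
    {Ω E : Type*} [MeasurableSpace Ω] [MeasurableSpace E] [MeasurableSingletonClass E]
    {μ : Measure Ω} {f : Ω → E} {s : Set E} (hs : s.Countable) (h : μ.map f s ≠ 0) :
    ∃ v, ∃ A ⊆ f ⁻¹' {v}, MeasurableSet A ∧ μ A ≠ 0 := by
  have hf : AEMeasurable f μ := by
    by_contra hf
    simp [Measure.map_of_not_aemeasurable hf] at h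
  obtain ⟨v, -, hv⟩ : ∃ v ∈ s, μ.map f {v} ≠ 0 := by
    by_contra! h'
    rw [← biUnion_of_singleton s] at h
    exact h ((measure_biUnion_null_iff hs).2 h')
  rw [Measure.map_apply_of_aemeasurable hf (measurableSet_singleton v)] at hv
  obtain ⟨A, hAv, hA, hAeq⟩ :=
    (hf.nullMeasurable (measurableSet_singleton v)).exists_measurable_subset_ae_eq
  exact ⟨v, A, hAv, hA, by rwa [measure_congr hAeq]⟩

section GeometricSeries

variable {lam K : ℝ} {c : ℕ → ℝ}

theorem norm_pow_mul_le (h0 : 0 ≤ lam) (hc : ∀ n, |c n| ≤ K) (n : ℕ) :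
    ‖lam ^ n * c n‖ ≤ K * lam ^ n := by
  rw [norm_mul, norm_pow, Real.norm_of_nonneg h0, Real.norm_eq_abs, mul_comm]
  exact mul_le_mul_of_nonneg_right (hc n) (pow_nonneg h0 n)

theorem summable_pow_mul_of_abs_le (h0 : 0 ≤ lam) (h1 : lam < 1) (hc : ∀ n, |c n| ≤ K) :
    Summable fun n => lam ^ n * c n :=
  .of_norm_bounded ((summable_geometric_of_lt_one h0 h1).mul_left K) (norm_pow_mul_le h0 hc)

theorem abs_tsum_pow_mul_le (h0 : 0 ≤ lam) (h1 : lam < 1) (hc : ∀ n, |c n| ≤ K) :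
    |∑' n, lam ^ n * c n| ≤ K * (1 - lam)⁻¹ :=
  tsum_of_norm_bounded ((hasSum_geometric_of_lt_one h0 h1).mul_left K) (norm_pow_mul_le h0 hc)

theorem tsum_pow_mul_ne_zero_of_gap (h0 : 0 < lam) (h1 : lam < 1) (hc : ∀ n, |c n| ≤ K)
    {δ : ℝ} {n₀ P : ℕ} (hP : K * lam ^ P < δ * (1 - lam)) (hδ : δ ≤ |c n₀|)
    (hgap : ∀ n < n₀ + P, n ≠ n₀ → c n = 0) : ∑' n, lam ^ n * c n ≠ 0 := by
  intro hsum
  have hP0 : 0 < P := Nat.pos_of_ne_zero fun hP0 => by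
    subst hP0
    nlinarith [hc n₀, abs_nonneg (c n₀)]
  have hsplit := (summable_pow_mul_of_abs_le h0.le h1 hc).sum_add_tsum_nat_add (n₀ + P)
  rw [Finset.sum_eq_single_of_mem n₀ (Finset.mem_range.2 (by omega))
    fun n hn hne => by rw [hgap n (Finset.mem_range.1 hn) hne, mul_zero], hsum] at hsplit
  have htail : ∑' n, lam ^ (n + (n₀ + P)) * c (n + (n₀ + P))
      = lam ^ n₀ * lam ^ P * ∑' n, lam ^ n * c (n + (n₀ + P)) := by
    rw [← tsum_mul_left]
    exact tsum_congr fun n => by ring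
  have hbound := abs_tsum_pow_mul_le h0.le h1 fun n => hc (n + (n₀ + P))
  have hfirst : lam ^ n₀ * |c n₀| ≤ lam ^ n₀ * (lam ^ P * (K * (1 - lam)⁻¹)) := by
    have hhead : lam ^ n₀ * c n₀ = -(lam ^ n₀ * lam ^ P * ∑' n, lam ^ n * c (n + (n₀ + P))) := by
      linarith
    rw [← abs_of_pos (pow_pos h0 n₀), ← abs_mul, hhead, abs_neg, abs_mul, abs_mul,
      abs_of_pos (pow_pos h0 n₀), abs_of_pos (pow_pos h0 P), mul_assoc]
    gcongr
  have hδ' : δ * (1 - lam) ≤ K * lam ^ P := by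
    have := le_of_mul_le_mul_left hfirst (pow_pos h0 n₀)
    have h1' : 0 < 1 - lam := by linarith
    calc δ * (1 - lam) ≤ lam ^ P * (K * (1 - lam)⁻¹) * (1 - lam) := by gcongr; linarith
      _ = K * lam ^ P := by field_simp
  linarith

end GeometricSeries

section Arcs

variable {N : ℕ} [NeZero N] {d : Fin N → ℝ} {b : ℝ → ℝ}

def arcEnd (d : Fin N → ℝ) (i : Fin N) : ℝ :=
  if (i : ℕ) + 1 = N then d (i + 1) + 1 else d (i + 1)

theorem arc_eq_Ico (i : Fin N) : arc d i = Ico (d i) (arcEnd d i) := by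
  unfold arc arcEnd
  split_ifs <;> rfl

theorem exists_arcEnd_eq_add_int (i : Fin N) : ∃ m : ℤ, arcEnd d i = d (i + 1) + m := by
  unfold arcEnd
  split_ifs
  exacts [⟨1, by simp⟩, ⟨0, by simp⟩]

theorem lt_arcEnd (hd : StrictMono d) (hdmem : ∀ i, d i ∈ Ico (0 : ℝ) 1) (i : Fin N) :
    d i < arcEnd d i := by
  unfold arcEnd
  split_ifs with hi
  · linarith [(hdmem i).2, (hdmem (i + 1)).1]
  · refine hd (Fin.lt_def.2 ?_)
    rw [Fin.val_add_one_of_lt' (by omega)]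
    omega

theorem mem_arc_self (hd : StrictMono d) (hdmem : ∀ i, d i ∈ Ico (0 : ℝ) 1) (i : Fin N) :
    d i ∈ arc d i := by
  rw [arc_eq_Ico]
  exact ⟨le_rfl, lt_arcEnd hd hdmem i⟩

theorem exists_mem_arc (hd : StrictMono d) {z : ℝ} (hz : z ∈ Ico (d 0) (d 0 + 1)) :
    ∃ i, z ∈ arc d i := by
  obtain ⟨i, hiz, hmax⟩ := (Finset.univ.filter fun i => d i ≤ z).exists_max_image d
    ⟨0, by simpa using hz.1⟩
  refine ⟨i, ?_⟩
  rw [arc_eq_Ico]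
  refine ⟨(Finset.mem_filter.1 hiz).2, ?_⟩
  unfold arcEnd
  split_ifs with hi
  · linarith [hz.2, hd.monotone (Fin.zero_le (i + 1))]
  · by_contra! hle
    have hlt : i < i + 1 := Fin.lt_def.2 (by rw [Fin.val_add_one_of_lt' (by omega)]; omega)
    exact (hd hlt).not_ge (hmax _ (by simpa using hle))

theorem exists_sub_int_mem_arc (hd : StrictMono d) (y : ℝ) :
    ∃ i, ∃ m : ℤ, y - m ∈ arc d i := by
  obtain ⟨i, hi⟩ := exists_mem_arc hd (z := y - ⌊y - d 0⌋)
    ⟨by linarith [Int.floor_le (y - d 0)], by linarith [Int.lt_floor_add_one (y - d 0)]⟩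
  exact ⟨i, _, hi⟩

variable (hd : StrictMono d) (hdmem : ∀ i, d i ∈ Ico (0 : ℝ) 1) (hbper : Function.Periodic b 1)
  (hbconst : ∀ i : Fin N, ∀ x ∈ arc d i, ∀ y ∈ arc d i, b x = b y)
include hd hdmem hbper hbconst

theorem b_eq_of_sub_int_mem_arc {y : ℝ} {m : ℤ} {i : Fin N} (h : y - m ∈ arc d i) :
    b y = b (d i) := by
  rw [← hbper.sub_int_mul_eq m, mul_one]
  exact hbconst i _ h _ (mem_arc_self hd hdmem i)

theorem exists_b_eq (y : ℝ) : ∃ i, b y = b (d i) :=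
  let ⟨i, _, hi⟩ := exists_sub_int_mem_arc hd y
  ⟨i, b_eq_of_sub_int_mem_arc hd hdmem hbper hbconst hi⟩

theorem finite_range_b : (range b).Finite :=
  (finite_range (b ∘ d)).subset <| range_subset_iff.2 fun y =>
    let ⟨i, hi⟩ := exists_b_eq hd hdmem hbper hbconst y
    ⟨i, hi.symm⟩

theorem exists_b_add_one_ne (hb : ¬∃ β, ∀ x, b x = β) : ∃ i : Fin N, b (d (i + 1)) ≠ b (d i) := by
  by_contra! h
  refine hb ⟨b (d 0), fun x => ?_⟩
  obtain ⟨i, hi⟩ := exists_b_eq hd hdmem hbper hbconst x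
  rw [hi, Fin.apply_eq_apply_zero_of_forall_add_one (f := fun i => b (d i)) h]

omit hdmem in
theorem exists_mem_Ioc_of_b_add_ne {y t : ℝ} (ht : 0 ≤ t) (h : b (y + t) ≠ b y) :
    ∃ j, ∃ m : ℤ, d j + m ∈ Ioc y (y + t) := by
  obtain ⟨i, m, hi⟩ := exists_sub_int_mem_arc hd y
  rw [arc_eq_Ico] at hi
  by_cases hend : y + t - m < arcEnd d i
  · refine absurd ?_ h
    have := hbconst i (y + t - m) (by rw [arc_eq_Ico]; exact ⟨by linarith [hi.1], hend⟩) (y - m)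
      (by rwa [arc_eq_Ico])
    rwa [← hbper.sub_int_mul_eq m, mul_one, ← hbper.sub_int_mul_eq (x := y) m, mul_one]
  · obtain ⟨m', hm'⟩ := exists_arcEnd_eq_add_int (d := d) i
    exact ⟨i + 1, m' + m, by push_cast; constructor <;> linarith [hi.2]⟩

theorem b_add_ne_of_mem_Ioc {i : Fin N} (hi : b (d (i + 1)) ≠ b (d i)) :
    ∃ ρ > 0, ∀ t < ρ, ∀ y, ∀ m : ℤ, d (i + 1) + m ∈ Ioc y (y + t) → b (y + t) ≠ b y := by
  obtain ⟨m', hm'⟩ := exists_arcEnd_eq_add_int (d := d) i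
  refine ⟨min (arcEnd d i - d i) (arcEnd d (i + 1) - d (i + 1)),
    lt_min (by linarith [lt_arcEnd hd hdmem i]) (by linarith [lt_arcEnd hd hdmem (i + 1)]),
    fun t ht y m hm => ?_⟩
  have hρ₁ := min_le_left (arcEnd d i - d i) (arcEnd d (i + 1) - d (i + 1))
  have hρ₂ := min_le_right (arcEnd d i - d i) (arcEnd d (i + 1) - d (i + 1))
  have hleft : b y = b (d i) := b_eq_of_sub_int_mem_arc hd hdmem hbper hbconst (m := m - m')
    (by rw [arc_eq_Ico]; push_cast; constructor <;> linarith [hm.1, hm.2])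
  have hright : b (y + t) = b (d (i + 1)) := b_eq_of_sub_int_mem_arc hd hdmem hbper hbconst
    (m := m) (by rw [arc_eq_Ico]; constructor <;> linarith [hm.1, hm.2])
  rwa [hleft, hright]

end Arcs

section Separation

variable {N : ℕ} {d : Fin N → ℝ} {α : ℝ}

def OrbitSeparated (α : ℝ) (d : Fin N → ℝ) (P : ℕ) (ε : ℝ) : Prop :=
  ∀ i j (p : ℕ) (m : ℤ), p < P → |d j - (d i + p * α + m)| < ε → i = j ∧ p = 0

theorem exists_orbitSeparated
    (horb : ∀ i j : Fin N, ∀ p : ℕ, ∀ m : ℤ, d j = d i + p * α + m → i = j ∧ p = 0) (P : ℕ) :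
    ∃ ε > 0, OrbitSeparated α d P ε := by
  set q : Fin N → Fin N → ℕ → ℝ := fun i j p => d j - d i - p * α
  have hev : ∀ᶠ ε in 𝓝 (0 : ℝ), ∀ (i j : Fin N) (p : Fin P),
      ¬(i = j ∧ (p : ℕ) = 0) → ε < |q i j p - round (q i j p)| := by
    simp only [eventually_all]
    intro i j p hij
    refine eventually_lt_nhds (abs_pos.2 (sub_ne_zero.2 fun h => hij ?_))
    exact horb i j p (round (q i j p)) (by simp only [q] at h; linarith)
  obtain ⟨ε, hε, hε0⟩ :=
    ((hev.filter_mono nhdsWithin_le_nhds).and (self_mem_nhdsWithin (s := Ioi 0))).exists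
  refine ⟨ε, hε0, fun i j p m hp hlt => ?_⟩
  by_contra hij
  have hround := round_le (q i j p) m
  have hq : |q i j p - m| = |d j - (d i + p * α + m)| := by simp only [q]; ring_nf
  linarith [hε i j ⟨p, hp⟩ hij]

variable [NeZero N] {b : ℝ → ℝ} {P : ℕ} {ε t : ℝ}

theorem b_add_eq_of_orbitSeparated (hd : StrictMono d) (hbper : Function.Periodic b 1)
    (hbconst : ∀ i : Fin N, ∀ x ∈ arc d i, ∀ y ∈ arc d i, b x = b y)
    (hsep : OrbitSeparated α d P ε) (ht : 0 ≤ t) (htε : t ≤ ε) {y : ℝ} (hy : b (y + t) ≠ b y)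
    {p : ℕ} (hp0 : 0 < p) (hpP : p < P) : b (y + p * α + t) = b (y + p * α) := by
  by_contra hne
  obtain ⟨i, m, hm⟩ := exists_mem_Ioc_of_b_add_ne hd hbper hbconst ht hy
  obtain ⟨j, m', hm'⟩ := exists_mem_Ioc_of_b_add_ne hd hbper hbconst ht hne
  have := hsep i j p (m - m') hpP <| by
    rw [abs_lt]; push_cast; constructor <;> linarith [hm.1, hm.2, hm'.1, hm'.2]
  omega

end Separation

section Series

variable {α lam β : ℝ} {b : ℝ → ℝ}

theorem Xser_const_eq (x : ℝ) :
    Xser α b (fun _ => lam) x = ∑' n : ℕ, lam ^ n * b (x + n * α) := by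
  simp only [Xser, Finset.prod_const, Finset.card_range]

theorem Xser_eq_div_of_forall_eq (h0 : 0 ≤ lam) (h1 : lam < 1) (hβ : ∀ x, b x = β) (x : ℝ) :
    Xser α b (fun _ => lam) x = β / (1 - lam) := by
  simp only [Xser_const_eq, hβ, tsum_mul_right, tsum_geometric_of_lt_one h0 h1, div_eq_inv_mul]

theorem map_Xser_of_forall_eq (h0 : 0 ≤ lam) (h1 : lam < 1) (hβ : ∀ x, b x = β) :
    Measure.map (Xser α b fun _ => lam) (volume.restrict (Ico (0 : ℝ) 1))
      = Measure.dirac (β / (1 - lam)) := by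
  rw [funext (Xser_eq_div_of_forall_eq h0 h1 hβ), Measure.map_const]
  simp [Real.volume_Ico]

variable {N : ℕ} [NeZero N] {d : Fin N → ℝ}

theorem eventually_Xser_add_ne (hirr : Irrational α) (hlam : lam ∈ Ioo (0 : ℝ) 1)
    (hd : StrictMono d) (hdmem : ∀ i, d i ∈ Ico (0 : ℝ) 1) (hbper : Function.Periodic b 1)
    (hbconst : ∀ i : Fin N, ∀ x ∈ arc d i, ∀ y ∈ arc d i, b x = b y)
    (horb : ∀ i j : Fin N, ∀ p : ℕ, ∀ m : ℤ, d j = d i + p * α + m → i = j ∧ p = 0)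
    (hb : ¬∃ β, ∀ x, b x = β) :
    ∀ᶠ t in 𝓝[>] (0 : ℝ), ∀ x, Xser α b (fun _ => lam) (x + t) ≠ Xser α b (fun _ => lam) x := by
  obtain ⟨i, hi⟩ := exists_b_add_one_ne hd hdmem hbper hbconst hb
  obtain ⟨ρ, hρ, hjump⟩ := b_add_ne_of_mem_Ioc hd hdmem hbper hbconst hi
  have hfin := finite_range_b hd hdmem hbper hbconst
  obtain ⟨C, hC⟩ := hfin.isBounded.exists_norm_le
  obtain ⟨K, hK⟩ := (hfin.sub hfin).isBounded.exists_norm_le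
  obtain ⟨δ, hδ, hδK⟩ := (hfin.sub hfin).exists_pos_le_abs
  obtain ⟨P, hP⟩ : ∃ P : ℕ, K * lam ^ P < δ * (1 - lam) :=
    (((tendsto_pow_atTop_nhds_zero_of_lt_one hlam.1.le hlam.2).const_mul K).eventually
      (gt_mem_nhds (by simpa using mul_pos hδ (sub_pos.2 hlam.2)))).exists
  obtain ⟨ε, hε, hsep⟩ := exists_orbitSeparated horb P
  filter_upwards [Ioo_mem_nhdsGT (lt_min hρ hε)] with t ⟨ht0, htρε⟩ x hX
  set c : ℕ → ℝ := fun n => b (x + n * α + t) - b (x + n * α) with hc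
  have hc_mem (n : ℕ) : c n ∈ range b - range b := ⟨_, mem_range_self _, _, mem_range_self _, rfl⟩
  have hex : ∃ n, c n ≠ 0 := by
    obtain ⟨n, m, hnm⟩ := hirr.exists_nat_mul_add_int_mem_Ioo (sub_lt_self (d (i + 1) - x) ht0)
    refine ⟨n, sub_ne_zero.2 (hjump t (htρε.trans_le (min_le_left _ _)) _ (-m) ?_)⟩
    push_cast
    constructor <;> linarith [hnm.1, hnm.2]
  have hsum : ∑' n, lam ^ n * c n = 0 := by
    have hb_abs (y : ℝ) : |b y| ≤ C := hC _ (mem_range_self y)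
    rw [Xser_const_eq, Xser_const_eq, ← sub_eq_zero, ← Summable.tsum_sub
      (summable_pow_mul_of_abs_le hlam.1.le hlam.2 fun n => hb_abs _)
      (summable_pow_mul_of_abs_le hlam.1.le hlam.2 fun n => hb_abs _)] at hX
    simpa only [hc, mul_sub, add_right_comm x t] using hX
  refine tsum_pow_mul_ne_zero_of_gap hlam.1 hlam.2 (fun n => hK _ (hc_mem n)) hP
    (hδK _ (hc_mem _) (Nat.find_spec hex)) (fun n hn hne => ?_) hsum
  rcases hne.lt_or_gt with hlt | hgt
  · exact not_not.1 (Nat.find_min hex hlt)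
  · have hshift : x + Nat.find hex * α + ((n - Nat.find hex : ℕ) : ℝ) * α = x + n * α := by
      rw [Nat.cast_sub hgt.le]
      ring
    have := b_add_eq_of_orbitSeparated hd hbper hbconst hsep ht0.le
      (htρε.le.trans (min_le_right _ _)) (sub_ne_zero.1 (Nat.find_spec hex))
      (p := n - Nat.find hex) (by omega) (by omega)
    rw [hshift] at this
    exact sub_eq_zero.2 this

end Series

theorem purely_atomic_iff_b_constant_distinct_orbits_general
    (α : ℝ) (hirr : Irrational α)
    (N : ℕ) [NeZero N] (d : Fin N → ℝ)
    (hd : StrictMono d) (hdmem : ∀ i, d i ∈ Set.Ico (0 : ℝ) 1)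
    (lam : ℝ) (hlam : lam ∈ Set.Ioo (0 : ℝ) 1)
    (b : ℝ → ℝ) (hbper : Function.Periodic b 1)
    (hbconst : ∀ i : Fin N, ∀ x ∈ arc d i, ∀ y ∈ arc d i, b x = b y)
    -- the `d_i` lie in pairwise distinct orbits of the rotation
    (horb : ∀ i j : Fin N, ∀ p : ℕ, ∀ m : ℤ, d j = d i + p * α + m → i = j ∧ p = 0) :
    ((∃ s : Set ℝ, s.Countable ∧
        Measure.map (Xser α b (fun _ => lam)) (volume.restrict (Set.Ico (0 : ℝ) 1)) s = 1)
      ↔ ∃ β : ℝ, ∀ x : ℝ, b x = β)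
    ∧ ∀ β : ℝ, (∀ x : ℝ, b x = β) →
        Measure.map (Xser α b (fun _ => lam)) (volume.restrict (Set.Ico (0 : ℝ) 1))
          = Measure.dirac (β / (1 - lam)) := by
  have hmap {β : ℝ} (hβ : ∀ x, b x = β) := map_Xser_of_forall_eq (α := α) hlam.1.le hlam.2 hβ
  refine ⟨⟨fun ⟨s, hs, hs1⟩ => ?_, fun ⟨β, hβ⟩ => ⟨{β / (1 - lam)}, countable_singleton _,
    by simp [hmap hβ]⟩⟩, fun β hβ => hmap hβ⟩
  by_contra hb
  obtain ⟨v, A, hAv, hAm, hA⟩ := Measure.exists_measurableSet_subset_preimage_singleton hs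
    (by rw [hs1]; exact one_ne_zero)
  have hA_pos : 0 < volume A :=
    (pos_iff_ne_zero.2 hA).trans_le (Measure.restrict_apply_le _ A)
  have hsub : ∀ᶠ t in 𝓝[>] (0 : ℝ), t ∈ A - A :=
    nhdsWithin_le_nhds (Measure.sub_mem_nhds_zero_of_addHaar_pos volume A hAm hA_pos)
  obtain ⟨t, ⟨x₁, hx₁, x₂, hx₂, rfl⟩, hne⟩ :=
    (hsub.and (eventually_Xser_add_ne hirr hlam hd hdmem hbper hbconst horb hb)).exists
  exact hne x₂ (by rw [add_sub_cancel, hAv hx₁, hAv hx₂])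

/-- If `r ≡ λ` is constant and the points `d_0,…,d_{N−1}` lie in pairwise distinct orbits of
the rotation, then `P_X` is purely atomic iff `b` is constant, in which case
`P_X = δ_{b/(1−λ)}`. -/
theorem purely_atomic_iff_b_constant_distinct_orbits
    (α : ℝ) (hα : α ∈ Set.Ioo (0 : ℝ) 1) (hirr : Irrational α)
    (N : ℕ) [NeZero N] (d : Fin N → ℝ)
    (hd : StrictMono d) (hdmem : ∀ i, d i ∈ Set.Ico (0 : ℝ) 1)
    (lam : ℝ) (hlam : lam ∈ Set.Ioo (0 : ℝ) 1)
    (b : ℝ → ℝ) (hbper : Function.Periodic b 1)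
    (hbconst : ∀ i : Fin N, ∀ x ∈ arc d i, ∀ y ∈ arc d i, b x = b y)
    -- the `d_i` lie in pairwise distinct orbits of the rotation
    (horb : ∀ i j : Fin N, ∀ p : ℕ, ∀ m : ℤ, d j = d i + p * α + m → i = j ∧ p = 0) :
    ((∃ s : Set ℝ, s.Countable ∧
        Measure.map (Xser α b (fun _ => lam)) (volume.restrict (Set.Ico (0 : ℝ) 1)) s = 1)
      ↔ ∃ β : ℝ, ∀ x : ℝ, b x = β)
    ∧ ∀ β : ℝ, (∀ x : ℝ, b x = β) →
        Measure.map (Xser α b (fun _ => lam)) (volume.restrict (Set.Ico (0 : ℝ) 1))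
          = Measure.dirac (β / (1 - lam)) :=
  purely_atomic_iff_b_constant_distinct_orbits_general α hirr N d hd hdmem lam hlam b hbper hbconst
    horb
end
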